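/- K = K₀ ∪ S ∪ Λ. (Lemma 4.1: the subalgebra K generated by S ∪ {q⁰,q¹,q²} consists exactly of the elements with a zero coordinate in N, the sequential elements, and the encoded configurations.) -/
import Mathlib


namespace Paper

/-- Direction of a Turing-machine head move. -/
inductive Dir : Type
  | L | R
deriving DecidableEq

/-- A Turing machine with states μ₀, μ₁, …, μ_k (μ₀ the halting state): for each state
μ_i with 1 ≤ i ≤ k and each tape symbol r, exactly one instruction μ_i r s D μ_m,
recorded as `instr i r = (s, D, m)`.  (The value of `instr` at `i = 0` is irrelevant:
no instruction begins with μ₀.) -/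
structure TM (k : ℕ) : Type where
  instr : Fin (k + 1) → Bool → Bool × Dir × Fin (k + 1)

/-- The universe of the algebra B(T):
`zero` = 0, `P j` = P_j, `one`,`two`,`H` the sequential elements U, and the machine
elements `C b i r s` = C_{ir}^s, `D b i r s` = D_{ir}^s, `M b i r` = M_i^r, where
`b = true` marks the barred copy V̄. -/
inductive BT (k : ℕ) : Type
  | zero : BT k
  | P : Fin 3 → BT k
  | one : BT k
  | two : BT k
  | H : BT k
  | C : Bool → Fin (k + 1) → Bool → Bool → BT k
  | D : Bool → Fin (k + 1) → Bool → Bool → BT k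
  | M : Bool → Fin (k + 1) → Bool → BT k
deriving DecidableEq

namespace BT

variable {k : ℕ}

/-- The partial order of B(T): x ≤ y iff x = 0, or x = y, or (x = P₂ and y ∈ {P₀,P₁}). -/
def le (x y : BT k) : Prop :=
  x = zero ∨ x = y ∨ (x = P 2 ∧ (y = P 0 ∨ y = P 1))

/-- x ∧ y: the greatest lower bound for `le`. -/
def meet (x y : BT k) : BT k :=
  if x = y then x
  else if x = P 2 ∧ (y = P 0 ∨ y = P 1) then P 2
  else if y = P 2 ∧ (x = P 0 ∨ x = P 1) then P 2
  else if (x = P 0 ∨ x = P 1) ∧ (y = P 0 ∨ y = P 1) then P 2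
  else zero

/-- membership in P = {P₀,P₁,P₂} -/
def isP : BT k → Bool
  | P _ => true
  | _ => false

/-- membership in U = {1,2,H} -/
def isU : BT k → Bool
  | one => true
  | two => true
  | H => true
  | _ => false

/-- membership in V ∪ V̄ -/
def isVV : BT k → Bool
  | C _ _ _ _ => true
  | D _ _ _ _ => true
  | M _ _ _ => true
  | _ => false

/-- membership in U ∪ V ∪ V̄ -/
def isUVV (x : BT k) : Bool := isU x || isVV x

/-- membership in V₀ = {C_{0r}^s, D_{0r}^s, M₀^r} (unbarred, state μ₀) -/
def isV0 : BT k → Bool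
  | C false i _ _ => i == 0
  | D false i _ _ => i == 0
  | M false i _ => i == 0
  | _ => false

/-- membership in V₁₀⁰ = {C₁₀⁰, M₁⁰, D₁₀⁰} -/
def isV10 (x : BT k) : Bool :=
  x == C false 1 false false || x == M false 1 false || x == D false 1 false false

/-- the bar involution on V ∪ V̄ (identity elsewhere) -/
def barOp : BT k → BT k
  | C b i r s => C (!b) i r s
  | D b i r s => D (!b) i r s
  | M b i r => M (!b) i r
  | x => x

/-- s₀ = C₁₀⁰, s₁ = M₁⁰, s₂ = D₁₀⁰ -/
def sel : Fin 3 → BT k := ![C false 1 false false, M false 1 false, D false 1 false false]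

/-- x ∧ⁱ y = x if x = y ∈ (P ∪ V₁₀⁰) \ {s_i}, else 0. -/
def meetI (i : Fin 3) (x y : BT k) : BT k :=
  if x = y ∧ (isP x ∨ isV10 x) ∧ x ≠ sel i then x else zero

/-- T₀(x) = P₂ if x ∈ {P₀,P₂}; P₀ if x = P₁; x if x ∈ V₀; else 0. -/
def T0 : BT k → BT k
  | P j => if j = 1 then P 0 else P 2
  | C false i r s => if i = 0 then C false i r s else zero
  | D false i r s => if i = 0 then D false i r s else zero
  | M false i r => if i = 0 then M false i r else zero
  | _ => zero

/-- T₁(x,y). -/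
def T1 (x y : BT k) : BT k :=
  if (x = P 0 ∧ y = P 0) ∨ (x = P 0 ∧ y = P 1) ∨ (x = P 1 ∧ y = P 0) ∨
     (x = P 0 ∧ y = P 2) ∨ (x = P 2 ∧ y = P 0) then P 1
  else if (x = P 1 ∨ x = P 2) ∧ (y = P 1 ∨ y = P 2) then P 2
  else if x = y ∧ isV10 x then x
  else zero

/-- J′(x,y,z) = x ∧ z if x = y or {x,y} ⊆ P; x if x = ȳ ∈ V ∪ V̄; else 0. -/
def J' (x y z : BT k) : BT k :=
  if x = y ∨ (isP x ∧ isP y) then meet x z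
  else if isVV y ∧ x = barOp y then x
  else zero

/-- the ternary discriminator: t(x,y,z) = z if x = y, else x. -/
def disc (x y z : BT k) : BT k := if x = y then z else x

/-- S₁(u,x,y,z). -/
def S1 (u x y z : BT k) : BT k :=
  if (u = one ∨ u = two) ∧ x = y ∧ y = z ∧ isUVV x then x
  else if isP x ∧ isP y ∧ isP z then disc x y z
  else zero

/-- S₂(u,v,x,y,z). -/
def S2 (u v x y z : BT k) : BT k :=
  if isVV v ∧ u = barOp v ∧ x = y ∧ y = z ∧ isVV x then x
  else if isP x ∧ isP y ∧ isP z then disc x y z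
  else zero

/-- L_{irt} for the instruction μ_i r s L μ_m (the barred clause is handled by carrying
the bar `b` of the argument through). -/
def Lop (i : Fin (k + 1)) (r s : Bool) (m : Fin (k + 1)) (t : Bool) :
    BT k → BT k → BT k → BT k := fun x y u =>
  match u with
  | P j => if x = one ∧ y = one then P j else zero
  | C b i' r' s' =>
      if x = one ∧ y = one ∧ i' = i ∧ r' = r then C b m t s'
      else if x = H ∧ y = one ∧ i' = i ∧ r' = r ∧ s' = t then M b m t
      else zero
  | M b i' r' => if x = two ∧ y = H ∧ i' = i ∧ r' = r then D b m t s else zero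
  | D b i' r' s' => if x = two ∧ y = two ∧ i' = i ∧ r' = r then D b m t s' else zero
  | _ => zero

/-- R_{irt} for the instruction μ_i r s R μ_m. -/
def Rop (i : Fin (k + 1)) (r s : Bool) (m : Fin (k + 1)) (t : Bool) :
    BT k → BT k → BT k → BT k := fun x y u =>
  match u with
  | P j => if x = one ∧ y = one then P j else zero
  | C b i' r' s' => if x = one ∧ y = one ∧ i' = i ∧ r' = r then C b m t s' else zero
  | M b i' r' => if x = H ∧ y = one ∧ i' = i ∧ r' = r then C b m t s else zero
  | D b i' r' s' =>
      if x = two ∧ y = H ∧ i' = i ∧ r' = r ∧ s' = t then M b m t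
      else if x = two ∧ y = two ∧ i' = i ∧ r' = r then D b m t s'
      else zero
  | _ => zero

end BT

/-- The forward machine operation determined by the unique instruction of T beginning
with μ_i r (for 1 ≤ i ≤ k) and the symbol t. -/
def fwd {k : ℕ} (T : TM k) (i : Fin (k + 1)) (r t : Bool) :
    BT k → BT k → BT k → BT k :=
  match T.instr i r with
  | (s, Dir.L, m) => BT.Lop i r s m t
  | (s, Dir.R, m) => BT.Rop i r s m t

/-- the reverse of a machine operation: F°(x,y,u) = v when F(x,y,v) = u ≠ 0, else 0. -/
noncomputable def revOp {k : ℕ} (F : BT k → BT k → BT k → BT k) (x y u : BT k) : BT k :=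
  haveI := Classical.propDecidable (u ≠ BT.zero ∧ ∃ v, F x y v = u)
  if h : u ≠ BT.zero ∧ ∃ v, F x y v = u then h.2.choose else BT.zero

/-- The machine operations ℳ: `b = false` gives the forward operation, `b = true` the
reverse operation. -/
noncomputable def mop {k : ℕ} (T : TM k) (i : Fin (k + 1)) (r t : Bool) (b : Bool) :
    BT k → BT k → BT k → BT k :=
  match b with
  | false => fwd T i r t
  | true => revOp (fwd T i r t)

/-- The relation ≺ on U: 2≺2, 2≺H, H≺1, 1≺1. -/
def prec {k : ℕ} : BT k → BT k → Bool
  | BT.two, BT.two => true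
  | BT.two, BT.H => true
  | BT.H, BT.one => true
  | BT.one, BT.one => true
  | _, _ => false

/-- U_i¹ built from the machine operation F. -/
def U1op {k : ℕ} (F : BT k → BT k → BT k → BT k) (x y z u : BT k) : BT k :=
  if prec x y ∧ prec x z ∧ y ≠ z ∧ BT.isVV (F x y u) then BT.barOp (F x y u)
  else if prec x y ∧ y = z then F x y u
  else BT.zero

/-- U_i² built from the machine operation F. -/
def U2op {k : ℕ} (F : BT k → BT k → BT k → BT k) (x y z u : BT k) : BT k :=
  if prec x z ∧ prec y z ∧ x ≠ y ∧ BT.isVV (F y z u) then BT.barOp (F y z u)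
  else if x = y ∧ prec y z then F y z u
  else BT.zero

/-- The n-ary polynomials of the algebra B(T): functions obtained by composing the basic
operations (the constant 0, T₀, T₁, ∧, ∧⁰, ∧¹, ∧², J′, S₁, S₂, the forward and reverse
machine operations, and the U_i¹, U_i²), coordinate projections and constants. -/
inductive PolyB {k : ℕ} (T : TM k) : {n : ℕ} → ((Fin n → BT k) → BT k) → Prop where
  | proj {n : ℕ} (i : Fin n) : PolyB T fun v => v i
  | const {n : ℕ} (c : BT k) : PolyB T fun _ : Fin n → BT k => c
  | t0 {n : ℕ} {p : (Fin n → BT k) → BT k} :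
      PolyB T p → PolyB T fun v => BT.T0 (p v)
  | t1 {n : ℕ} {p q : (Fin n → BT k) → BT k} :
      PolyB T p → PolyB T q → PolyB T fun v => BT.T1 (p v) (q v)
  | meet {n : ℕ} {p q : (Fin n → BT k) → BT k} :
      PolyB T p → PolyB T q → PolyB T fun v => BT.meet (p v) (q v)
  | meetI (j : Fin 3) {n : ℕ} {p q : (Fin n → BT k) → BT k} :
      PolyB T p → PolyB T q → PolyB T fun v => BT.meetI j (p v) (q v)
  | jop {n : ℕ} {p q r : (Fin n → BT k) → BT k} :
      PolyB T p → PolyB T q → PolyB T r → PolyB T fun v => BT.J' (p v) (q v) (r v)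
  | s1 {n : ℕ} {p q r s : (Fin n → BT k) → BT k} :
      PolyB T p → PolyB T q → PolyB T r → PolyB T s →
      PolyB T fun v => BT.S1 (p v) (q v) (r v) (s v)
  | s2 {n : ℕ} {p q r s w : (Fin n → BT k) → BT k} :
      PolyB T p → PolyB T q → PolyB T r → PolyB T s → PolyB T w →
      PolyB T fun v => BT.S2 (p v) (q v) (r v) (s v) (w v)
  | mach (i : Fin (k + 1)) (hi : i ≠ 0) (r t b : Bool) {n : ℕ}
      {p q u : (Fin n → BT k) → BT k} :
      PolyB T p → PolyB T q → PolyB T u →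
      PolyB T fun v => mop T i r t b (p v) (q v) (u v)
  | u1 (i : Fin (k + 1)) (hi : i ≠ 0) (r t b : Bool) {n : ℕ}
      {p q r' s : (Fin n → BT k) → BT k} :
      PolyB T p → PolyB T q → PolyB T r' → PolyB T s →
      PolyB T fun v => U1op (mop T i r t b) (p v) (q v) (r' v) (s v)
  | u2 (i : Fin (k + 1)) (hi : i ≠ 0) (r t b : Bool) {n : ℕ}
      {p q r' s : (Fin n → BT k) → BT k} :
      PolyB T p → PolyB T q → PolyB T r' → PolyB T s →
      PolyB T fun v => U2op (mop T i r t b) (p v) (q v) (r' v) (s v)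

/-- unary polynomials of B(T) -/
def UPolyB {k : ℕ} (T : TM k) (F : BT k → BT k) : Prop :=
  PolyB T (n := 1) fun v => F (v 0)

/-- binary polynomials of B(T) -/
def BPolyB {k : ℕ} (T : TM k) (F : BT k → BT k → BT k) : Prop :=
  PolyB T (n := 2) fun v => F (v 0) (v 1)

/-- A Turing machine configuration ⟨tape, head position, state⟩. -/
structure Cfg (k : ℕ) : Type where
  tape : ℤ → Bool
  pos : ℤ
  state : Fin (k + 1)

/-- One computation step of T (halted configurations, in state μ₀, are fixed). -/
def cfgStep {k : ℕ} (T : TM k) (c : Cfg k) : Cfg k :=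
  if c.state = 0 then c
  else
    match T.instr c.state (c.tape c.pos) with
    | (s, Dir.L, m) => ⟨Function.update c.tape c.pos s, c.pos - 1, m⟩
    | (s, Dir.R, m) => ⟨Function.update c.tape c.pos s, c.pos + 1, m⟩

/-- The initial configuration Q₀ = ⟨t₀, 0, μ₁⟩, t₀ the all-zero tape. -/
def Q0 (k : ℕ) : Cfg k := ⟨fun _ => false, 0, 1⟩

/-- N = {n₀,…,n_m} ∪ {−1,0,1}: the squares visited during the halting computation
Q₀, …, Q_m, together with −1, 0, 1. -/
def Nset {k : ℕ} (T : TM k) (m : ℕ) : Finset ℤ :=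
  ((Finset.range (m + 1)).image fun j => ((cfgStep T)^[j] (Q0 k)).pos) ∪ {-1, 0, 1}

/-- The universe of the direct power A = B(T)^Y, where Y = {s₀} ∪ N: the coordinate
`none` is the extra coordinate s₀ ∉ N, and `some x` the coordinate x ∈ N. -/
abbrev AA {k : ℕ} (T : TM k) (m : ℕ) : Type := Option {x : ℤ // x ∈ Nset T m} → BT k

/-- The sequential generator a_n (n ∈ N). -/
def aEl {k : ℕ} (T : TM k) (m : ℕ) (n : ℤ) : AA T m := fun y =>
  match y with
  | none => BT.one
  | some x => if x.1 < n then BT.one else if x.1 = n then BT.H else BT.two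

/-- The generator q^j (j ∈ {0,1,2}). -/
def qEl {k : ℕ} (T : TM k) (m : ℕ) (j : Fin 3) : AA T m := fun y =>
  match y with
  | none => BT.P j
  | some x =>
      if x.1 < 0 then BT.C false 1 false false
      else if x.1 = 0 then BT.M false 1 false
      else BT.D false 1 false false

/-- K: the subalgebra of A = B(T)^Y generated by S ∪ {q⁰,q¹,q²}
(operations computed coordinatewise). -/
inductive InK {k : ℕ} (T : TM k) (m : ℕ) : AA T m → Prop where
  | gen_a (n : ℤ) (hn : n ∈ Nset T m) : InK T m (aEl T m n)
  | gen_q (j : Fin 3) : InK T m (qEl T m j)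
  | zeroOp : InK T m fun _ => BT.zero
  | t0 {f : AA T m} : InK T m f → InK T m fun y => BT.T0 (f y)
  | t1 {f g : AA T m} : InK T m f → InK T m g → InK T m fun y => BT.T1 (f y) (g y)
  | meet {f g : AA T m} : InK T m f → InK T m g → InK T m fun y => BT.meet (f y) (g y)
  | meetI (j : Fin 3) {f g : AA T m} :
      InK T m f → InK T m g → InK T m fun y => BT.meetI j (f y) (g y)
  | jop {f g h : AA T m} : InK T m f → InK T m g → InK T m h →
      InK T m fun y => BT.J' (f y) (g y) (h y)
  | s1 {f g h p : AA T m} : InK T m f → InK T m g → InK T m h → InK T m p →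
      InK T m fun y => BT.S1 (f y) (g y) (h y) (p y)
  | s2 {f g h p q : AA T m} : InK T m f → InK T m g → InK T m h → InK T m p → InK T m q →
      InK T m fun y => BT.S2 (f y) (g y) (h y) (p y) (q y)
  | mach (i : Fin (k + 1)) (hi : i ≠ 0) (r t b : Bool) {f g h : AA T m} :
      InK T m f → InK T m g → InK T m h →
      InK T m fun y => mop T i r t b (f y) (g y) (h y)
  | u1 (i : Fin (k + 1)) (hi : i ≠ 0) (r t b : Bool) {f g h p : AA T m} :
      InK T m f → InK T m g → InK T m h → InK T m p →
      InK T m fun y => U1op (mop T i r t b) (f y) (g y) (h y) (p y)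
  | u2 (i : Fin (k + 1)) (hi : i ≠ 0) (r t b : Bool) {f g h p : AA T m} :
      InK T m f → InK T m g → InK T m h → InK T m p →
      InK T m fun y => U2op (mop T i r t b) (f y) (g y) (h y) (p y)

/-- The n-ary polynomials of the algebra K: compositions of the basic operations
(computed coordinatewise), coordinate projections, and constants from K. -/
inductive PolyK {k : ℕ} (T : TM k) (m : ℕ) :
    {n : ℕ} → ((Fin n → AA T m) → AA T m) → Prop where
  | proj {n : ℕ} (i : Fin n) : PolyK T m fun v => v i
  | const {n : ℕ} (c : AA T m) (hc : InK T m c) : PolyK T m fun _ : Fin n → AA T m => c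
  | zeroOp {n : ℕ} : PolyK T m fun (_ : Fin n → AA T m) _ => BT.zero
  | t0 {n : ℕ} {p : (Fin n → AA T m) → AA T m} :
      PolyK T m p → PolyK T m fun v y => BT.T0 (p v y)
  | t1 {n : ℕ} {p q : (Fin n → AA T m) → AA T m} :
      PolyK T m p → PolyK T m q → PolyK T m fun v y => BT.T1 (p v y) (q v y)
  | meet {n : ℕ} {p q : (Fin n → AA T m) → AA T m} :
      PolyK T m p → PolyK T m q → PolyK T m fun v y => BT.meet (p v y) (q v y)
  | meetI (j : Fin 3) {n : ℕ} {p q : (Fin n → AA T m) → AA T m} :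
      PolyK T m p → PolyK T m q → PolyK T m fun v y => BT.meetI j (p v y) (q v y)
  | jop {n : ℕ} {p q r : (Fin n → AA T m) → AA T m} :
      PolyK T m p → PolyK T m q → PolyK T m r →
      PolyK T m fun v y => BT.J' (p v y) (q v y) (r v y)
  | s1 {n : ℕ} {p q r s : (Fin n → AA T m) → AA T m} :
      PolyK T m p → PolyK T m q → PolyK T m r → PolyK T m s →
      PolyK T m fun v y => BT.S1 (p v y) (q v y) (r v y) (s v y)
  | s2 {n : ℕ} {p q r s w : (Fin n → AA T m) → AA T m} :
      PolyK T m p → PolyK T m q → PolyK T m r → PolyK T m s → PolyK T m w →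
      PolyK T m fun v y => BT.S2 (p v y) (q v y) (r v y) (s v y) (w v y)
  | mach (i : Fin (k + 1)) (hi : i ≠ 0) (r t b : Bool) {n : ℕ}
      {p q u : (Fin n → AA T m) → AA T m} :
      PolyK T m p → PolyK T m q → PolyK T m u →
      PolyK T m fun v y => mop T i r t b (p v y) (q v y) (u v y)
  | u1 (i : Fin (k + 1)) (hi : i ≠ 0) (r t b : Bool) {n : ℕ}
      {p q r' s : (Fin n → AA T m) → AA T m} :
      PolyK T m p → PolyK T m q → PolyK T m r' → PolyK T m s →
      PolyK T m fun v y => U1op (mop T i r t b) (p v y) (q v y) (r' v y) (s v y)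
  | u2 (i : Fin (k + 1)) (hi : i ≠ 0) (r t b : Bool) {n : ℕ}
      {p q r' s : (Fin n → AA T m) → AA T m} :
      PolyK T m p → PolyK T m q → PolyK T m r' → PolyK T m s →
      PolyK T m fun v y => U2op (mop T i r t b) (p v y) (q v y) (r' v y) (s v y)

/-- unary polynomials of K -/
def UPolyK {k : ℕ} (T : TM k) (m : ℕ) (F : AA T m → AA T m) : Prop :=
  PolyK T m (n := 1) fun v => F (v 0)

/-- binary polynomials of K -/
def BPolyK {k : ℕ} (T : TM k) (m : ℕ) (F : AA T m → AA T m → AA T m) : Prop :=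
  PolyK T m (n := 2) fun v => F (v 0) (v 1)

/-- Q ∈ Cfg⋆: T, started in configuration Q, reaches the halting configuration
Q_m in finitely many steps, the head visiting only squares in N. -/
def InCfgStar {k : ℕ} (T : TM k) (m : ℕ) (Q : Cfg k) : Prop :=
  ∃ j : ℕ, (cfgStep T)^[j] Q = (cfgStep T)^[m] (Q0 k) ∧
    ∀ l ≤ j, ((cfgStep T)^[l] Q).pos ∈ Nset T m

/-- β^j(Q): the encoding of the configuration Q (with P_j in coordinate s₀). -/
def betaEl {k : ℕ} (T : TM k) (m : ℕ) (j : Fin 3) (Q : Cfg k) : AA T m := fun y =>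
  match y with
  | none => BT.P j
  | some x =>
      if x.1 < Q.pos then BT.C false Q.state (Q.tape Q.pos) (Q.tape x.1)
      else if x.1 = Q.pos then BT.M false Q.state (Q.tape Q.pos)
      else BT.D false Q.state (Q.tape Q.pos) (Q.tape x.1)

/-- K₀ = {f ∈ K : f(x) = 0 for some x ∈ N}. -/
def K0 {k : ℕ} (T : TM k) (m : ℕ) : Set (AA T m) :=
  {f | InK T m f ∧ ∃ x : {x : ℤ // x ∈ Nset T m}, f (some x) = BT.zero}

/-- S = {a_n : n ∈ N}. -/
def Sset {k : ℕ} (T : TM k) (m : ℕ) : Set (AA T m) :=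
  {f | ∃ n ∈ Nset T m, f = aEl T m n}

/-- Λ = {β^j(Q) : Q ∈ Cfg⋆, j ∈ {0,1,2}}. -/
def Lam {k : ℕ} (T : TM k) (m : ℕ) : Set (AA T m) :=
  {f | ∃ (j : Fin 3) (Q : Cfg k), InCfgStar T m Q ∧ f = betaEl T m j Q}

/-- θ: (f,g) ∈ θ iff f, g ∈ K and for every unary polynomial F of K,
F(f) = q² ⇔ F(g) = q². -/
def theta {k : ℕ} (T : TM k) (m : ℕ) (f g : AA T m) : Prop :=
  InK T m f ∧ InK T m g ∧
    ∀ F : AA T m → AA T m, UPolyK T m F → (F f = qEl T m 2 ↔ F g = qEl T m 2)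

/-- A congruence of K: an equivalence relation on K preserved by all basic operations. -/
structure IsCongK {k : ℕ} (T : TM k) (m : ℕ) (R : AA T m → AA T m → Prop) : Prop where
  refl : ∀ f, InK T m f → R f f
  symm : ∀ {f g}, R f g → R g f
  trans : ∀ {f g h}, R f g → R g h → R f h
  dom : ∀ {f g}, R f g → InK T m f ∧ InK T m g
  t0 : ∀ {f f'}, R f f' → R (fun y => BT.T0 (f y)) (fun y => BT.T0 (f' y))
  t1 : ∀ {f f' g g'}, R f f' → R g g' →
    R (fun y => BT.T1 (f y) (g y)) (fun y => BT.T1 (f' y) (g' y))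
  meet : ∀ {f f' g g'}, R f f' → R g g' →
    R (fun y => BT.meet (f y) (g y)) (fun y => BT.meet (f' y) (g' y))
  meetI : ∀ (j : Fin 3) {f f' g g'}, R f f' → R g g' →
    R (fun y => BT.meetI j (f y) (g y)) (fun y => BT.meetI j (f' y) (g' y))
  jop : ∀ {f f' g g' h h'}, R f f' → R g g' → R h h' →
    R (fun y => BT.J' (f y) (g y) (h y)) (fun y => BT.J' (f' y) (g' y) (h' y))
  s1 : ∀ {f f' g g' h h' p p'}, R f f' → R g g' → R h h' → R p p' →
    R (fun y => BT.S1 (f y) (g y) (h y) (p y))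
      (fun y => BT.S1 (f' y) (g' y) (h' y) (p' y))
  s2 : ∀ {f f' g g' h h' p p' q q'}, R f f' → R g g' → R h h' → R p p' → R q q' →
    R (fun y => BT.S2 (f y) (g y) (h y) (p y) (q y))
      (fun y => BT.S2 (f' y) (g' y) (h' y) (p' y) (q' y))
  mach : ∀ (i : Fin (k + 1)), i ≠ 0 → ∀ (r t b : Bool) {f f' g g' h h'},
    R f f' → R g g' → R h h' →
    R (fun y => mop T i r t b (f y) (g y) (h y))
      (fun y => mop T i r t b (f' y) (g' y) (h' y))
  u1 : ∀ (i : Fin (k + 1)), i ≠ 0 → ∀ (r t b : Bool) {f f' g g' h h' p p'},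
    R f f' → R g g' → R h h' → R p p' →
    R (fun y => U1op (mop T i r t b) (f y) (g y) (h y) (p y))
      (fun y => U1op (mop T i r t b) (f' y) (g' y) (h' y) (p' y))
  u2 : ∀ (i : Fin (k + 1)), i ≠ 0 → ∀ (r t b : Bool) {f f' g g' h h' p p'},
    R f f' → R g g' → R h h' → R p p' →
    R (fun y => U2op (mop T i r t b) (f y) (g y) (h y) (p y))
      (fun y => U2op (mop T i r t b) (f' y) (g' y) (h' y) (p' y))

/-- θ̄: the smallest congruence of K containing θ ∪ {(q⁰,q²)} (the intersection of all
congruences of K containing θ and (q⁰,q²)). -/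
def thetaBar {k : ℕ} (T : TM k) (m : ℕ) (f g : AA T m) : Prop :=
  InK T m f ∧ InK T m g ∧
    ∀ R : AA T m → AA T m → Prop, IsCongK T m R → (∀ a b, theta T m a b → R a b) →
      R (qEl T m 0) (qEl T m 2) → R f g

section Lemma41
variable {k : ℕ}

/-! ### Basic Turing machine lemmas -/

lemma cfgStep_halt (T : TM k) {c : Cfg k} (h : c.state = 0) : cfgStep T c = c := by
  simp [cfgStep, h]

lemma cfgStep_iter_halt (T : TM k) {c : Cfg k} (h : c.state = 0) (n : ℕ) :
    (cfgStep T)^[n] c = c := by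
  induction n with
  | zero => rfl
  | succ n ih => rw [Function.iterate_succ_apply, cfgStep_halt T h, ih]

lemma cfgStep_pos (T : TM k) (c : Cfg k) :
    (cfgStep T c).pos = c.pos - 1 ∨ (cfgStep T c).pos = c.pos + 1 ∨
      (cfgStep T c).pos = c.pos := by
  unfold cfgStep
  split
  · tauto
  · rcases h : T.instr c.state (c.tape c.pos) with ⟨s, d, mm⟩
    cases d <;> simp [h] <;> tauto

/-- position in the standard computation -/
def posAt (T : TM k) (j : ℕ) : ℤ := ((cfgStep T)^[j] (Q0 k)).pos

lemma posAt_zero (T : TM k) : posAt T 0 = 0 := rfl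

lemma posAt_succ (T : TM k) (j : ℕ) :
    posAt T (j+1) = posAt T j - 1 ∨ posAt T (j+1) = posAt T j + 1 ∨
      posAt T (j+1) = posAt T j := by
  have := cfgStep_pos T ((cfgStep T)^[j] (Q0 k))
  simpa [posAt, Function.iterate_succ_apply'] using this

lemma mem_Nset_iff (T : TM k) (m : ℕ) {x : ℤ} :
    x ∈ Nset T m ↔ (∃ j ≤ m, posAt T j = x) ∨ x = -1 ∨ x = 0 ∨ x = 1 := by
  unfold Nset posAt
  rw [Finset.mem_union, Finset.mem_image]
  simp only [Finset.mem_range, Nat.lt_succ_iff, Finset.mem_insert, Finset.mem_singleton]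

lemma mem_Nset_pos (T : TM k) (m : ℕ) {j : ℕ} (hj : j ≤ m) : posAt T j ∈ Nset T m :=
  (mem_Nset_iff T m).2 (Or.inl ⟨j, hj, rfl⟩)

lemma zero_mem_Nset (T : TM k) (m : ℕ) : (0 : ℤ) ∈ Nset T m :=
  (mem_Nset_iff T m).2 (Or.inr (Or.inr (Or.inl rfl)))

lemma neg_one_mem_Nset (T : TM k) (m : ℕ) : (-1 : ℤ) ∈ Nset T m :=
  (mem_Nset_iff T m).2 (Or.inr (Or.inl rfl))

lemma one_mem_Nset (T : TM k) (m : ℕ) : (1 : ℤ) ∈ Nset T m :=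
  (mem_Nset_iff T m).2 (Or.inr (Or.inr (Or.inr rfl)))

lemma walk_ivt_pos (T : TM k) :
    ∀ j : ℕ, ∀ v : ℤ, 0 ≤ v → v ≤ posAt T j → ∃ l ≤ j, posAt T l = v := by
  intro j
  induction j with
  | zero =>
    intro v h0 h1
    rw [posAt_zero] at h1
    exact ⟨0, le_refl 0, by rw [posAt_zero]; omega⟩
  | succ j ih =>
    intro v h0 h1
    by_cases hv : v ≤ posAt T j
    · obtain ⟨l, hl, he⟩ := ih v h0 hv
      exact ⟨l, Nat.le_succ_of_le hl, he⟩
    · have := posAt_succ T j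
      exact ⟨j+1, le_refl _, by omega⟩

lemma walk_ivt_neg (T : TM k) :
    ∀ j : ℕ, ∀ v : ℤ, v ≤ 0 → posAt T j ≤ v → ∃ l ≤ j, posAt T l = v := by
  intro j
  induction j with
  | zero =>
    intro v h0 h1
    rw [posAt_zero] at h1
    exact ⟨0, le_refl 0, by rw [posAt_zero]; omega⟩
  | succ j ih =>
    intro v h0 h1
    by_cases hv : posAt T j ≤ v
    · obtain ⟨l, hl, he⟩ := ih v h0 hv
      exact ⟨l, Nat.le_succ_of_le hl, he⟩
    · have := posAt_succ T j
      exact ⟨j+1, le_refl _, by omega⟩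

lemma Nset_interval (T : TM k) (m : ℕ) {a b v : ℤ}
    (ha : a ∈ Nset T m) (hb : b ∈ Nset T m) (h1 : a ≤ v) (h2 : v ≤ b) :
    v ∈ Nset T m := by
  rcases le_or_gt 0 v with h0 | h0
  · rcases (mem_Nset_iff T m).1 hb with ⟨j, hj, he⟩ | hb'
    · obtain ⟨l, hl, he'⟩ := walk_ivt_pos T j v h0 (by omega)
      exact (mem_Nset_iff T m).2 (Or.inl ⟨l, le_trans hl hj, he'⟩)
    · exact (mem_Nset_iff T m).2 (Or.inr (by omega))
  · rcases (mem_Nset_iff T m).1 ha with ⟨j, hj, he⟩ | ha'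
    · obtain ⟨l, hl, he'⟩ := walk_ivt_neg T j v (by omega) (by omega)
      exact (mem_Nset_iff T m).2 (Or.inl ⟨l, le_trans hl hj, he'⟩)
    · exact (mem_Nset_iff T m).2 (Or.inr (by omega))

end Lemma41
section Lemma41b
variable {k : ℕ}

lemma cfgStep_tape_ne (T : TM k) {c : Cfg k} {x : ℤ} (hx : x ≠ c.pos) :
    (cfgStep T c).tape x = c.tape x := by
  unfold cfgStep
  split
  · rfl
  · rcases h : T.instr c.state (c.tape c.pos) with ⟨s, d, mm⟩
    cases d <;> simp [h, Function.update_of_ne hx]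

lemma iter_tape_stable (T : TM k) (c : Cfg k) (x : ℤ) :
    ∀ n : ℕ, (∀ l < n, ((cfgStep T)^[l] c).pos ≠ x) →
      ((cfgStep T)^[n] c).tape x = c.tape x := by
  intro n
  induction n with
  | zero => intro _; rfl
  | succ n ih =>
    intro h
    rw [Function.iterate_succ_apply', cfgStep_tape_ne T (h n (Nat.lt_succ_self n)).symm,
      ih (fun l hl => h l (Nat.lt_succ_of_lt hl))]

/-- translation of a configuration -/
def trC (p : ℤ) (c : Cfg k) : Cfg k := ⟨fun x => c.tape (x - p), c.pos + p, c.state⟩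

lemma trC_step (T : TM k) (p : ℤ) (c : Cfg k) :
    cfgStep T (trC p c) = trC p (cfgStep T c) := by
  unfold cfgStep trC
  simp only [add_sub_cancel_right]
  split
  · rfl
  · rcases h : T.instr c.state (c.tape c.pos) with ⟨s, d, mm⟩
    cases d <;> simp only [h] <;> refine Cfg.mk.injEq _ _ _ _ _ _ ▸ ⟨?_, by ring, rfl⟩ <;>
      · funext x
        by_cases hx : x = c.pos + p
        · subst hx
          rw [Function.update_self, show c.pos + p - p = c.pos by ring, Function.update_self]
        · rw [Function.update_of_ne hx, Function.update_of_ne (by omega)]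

lemma trC_iter (T : TM k) (p : ℤ) (c : Cfg k) (n : ℕ) :
    (cfgStep T)^[n] (trC p c) = trC p ((cfgStep T)^[n] c) := by
  induction n with
  | zero => rfl
  | succ n ih => rw [Function.iterate_succ_apply', Function.iterate_succ_apply', ih, trC_step]

/-- any iterate of Q0 whose state is 0 equals the halting configuration -/
lemma iter_halted_eq (T : TM k) (m : ℕ) (hm : ((cfgStep T)^[m] (Q0 k)).state = 0)
    {j : ℕ} (hj : ((cfgStep T)^[j] (Q0 k)).state = 0) :
    (cfgStep T)^[j] (Q0 k) = (cfgStep T)^[m] (Q0 k) := by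
  rcases le_total j m with h | h
  · obtain ⟨d, rfl⟩ := Nat.exists_eq_add_of_le h
    rw [Nat.add_comm, Function.iterate_add_apply, cfgStep_iter_halt T hj]
  · obtain ⟨d, rfl⟩ := Nat.exists_eq_add_of_le h
    rw [Nat.add_comm, Function.iterate_add_apply, cfgStep_iter_halt T hm]

/-- the halting tape is all-zero outside N -/
lemma final_tape_off (T : TM k) (m : ℕ) {x : ℤ} (hx : x ∉ Nset T m) :
    ((cfgStep T)^[m] (Q0 k)).tape x = false := by
  have := iter_tape_stable T (Q0 k) x m (fun l hl => by
    intro he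
    exact hx (he ▸ mem_Nset_pos T m (le_of_lt hl)))
  rw [this]; rfl

/-- KEY impossibility: no configuration in Cfg⋆ has state μ₁, all-zero tape on N,
and nonzero position (used for the meetI case). -/
lemma no_translate (T : TM k) (m : ℕ) (hm : ((cfgStep T)^[m] (Q0 k)).state = 0)
    {Q : Cfg k} (hQ : InCfgStar T m Q) (hst : Q.state = 1)
    (htape : ∀ x ∈ Nset T m, Q.tape x = false) (hpos : Q.pos ≠ 0) : False := by
  obtain ⟨j, hj, hposs⟩ := hQ
  -- Q's tape is all-zero
  have htape' : ∀ x : ℤ, Q.tape x = false := by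
    intro x
    by_cases hx : x ∈ Nset T m
    · exact htape x hx
    · have hstable := iter_tape_stable T Q x j (fun l hl => by
        intro he
        exact hx (he ▸ hposs l (le_of_lt hl)))
      rw [hj] at hstable
      rw [← hstable, final_tape_off T m hx]
  -- Q is a translate of Q0
  have hQtr : Q = trC Q.pos (Q0 k) := by
    rcases Q with ⟨t, p, s⟩
    simp only [trC, Q0]
    refine Cfg.mk.injEq _ _ _ _ _ _ ▸ ⟨?_, by ring, hst⟩
    funext x; exact htape' x
  rw [hQtr, trC_iter] at hj
  have hstate : ((cfgStep T)^[j] (Q0 k)).state = 0 := by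
    have := congrArg Cfg.state hj
    simpa [trC, hm] using this
  rw [iter_halted_eq T m hm hstate] at hj
  have := congrArg Cfg.pos hj
  simp only [trC] at this
  omega

/-! ### Cfg⋆ lemmas -/

lemma Q0_star (T : TM k) (m : ℕ) : InCfgStar T m (Q0 k) :=
  ⟨m, rfl, fun l hl => mem_Nset_pos T m hl⟩

lemma star_step (T : TM k) (m : ℕ) (hm : ((cfgStep T)^[m] (Q0 k)).state = 0)
    {Q : Cfg k} (hQ : InCfgStar T m Q) (hst : Q.state ≠ 0) :
    InCfgStar T m (cfgStep T Q) := by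
  obtain ⟨j, hj, hposs⟩ := hQ
  rcases j with _ | j
  · exact absurd (congrArg Cfg.state hj.symm ▸ hm) (by simpa using hst)
  · refine ⟨j, ?_, fun l hl => ?_⟩
    · rw [← Function.iterate_succ_apply, hj]
    · rw [← Function.iterate_succ_apply]
      exact hposs (l + 1) (Nat.succ_le_succ hl)

lemma star_pred (T : TM k) (m : ℕ) {Q Q' : Cfg k} (hQ : InCfgStar T m Q)
    (hstep : cfgStep T Q' = Q) (hpos : Q'.pos ∈ Nset T m) : InCfgStar T m Q' := by
  obtain ⟨j, hj, hposs⟩ := hQ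
  refine ⟨j + 1, ?_, fun l hl => ?_⟩
  · rw [Function.iterate_succ_apply, hstep, hj]
  · rcases l with _ | l
    · exact hpos
    · rw [Function.iterate_succ_apply, hstep]
      exact hposs l (Nat.succ_le_succ_iff.1 hl)

end Lemma41b
section Lemma41c
variable {k : ℕ} {T : TM k} {m : ℕ}

/-! ### coordinate value lemmas -/

lemma aEl_some_lt {n : ℤ} {x : {x : ℤ // x ∈ Nset T m}} (h : x.1 < n) :
    aEl T m n (some x) = BT.one := by unfold aEl; simp only; rw [if_pos h]

lemma aEl_some_eq {n : ℤ} {x : {x : ℤ // x ∈ Nset T m}} (h : x.1 = n) :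
    aEl T m n (some x) = BT.H := by
  unfold aEl; simp only; rw [if_neg (by omega), if_pos h]

lemma aEl_some_gt {n : ℤ} {x : {x : ℤ // x ∈ Nset T m}} (h : n < x.1) :
    aEl T m n (some x) = BT.two := by
  unfold aEl; simp only; rw [if_neg (by omega), if_neg (by omega)]

lemma betaEl_some_lt {j : Fin 3} {Q : Cfg k} {x : {x : ℤ // x ∈ Nset T m}}
    (h : x.1 < Q.pos) :
    betaEl T m j Q (some x) = BT.C false Q.state (Q.tape Q.pos) (Q.tape x.1) := by
  unfold betaEl; simp only; rw [if_pos h]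

lemma betaEl_some_eq {j : Fin 3} {Q : Cfg k} {x : {x : ℤ // x ∈ Nset T m}}
    (h : x.1 = Q.pos) :
    betaEl T m j Q (some x) = BT.M false Q.state (Q.tape Q.pos) := by
  unfold betaEl; simp only; rw [if_neg (by omega), if_pos h]

lemma betaEl_some_gt {j : Fin 3} {Q : Cfg k} {x : {x : ℤ // x ∈ Nset T m}}
    (h : Q.pos < x.1) :
    betaEl T m j Q (some x) = BT.D false Q.state (Q.tape Q.pos) (Q.tape x.1) := by
  unfold betaEl; simp only; rw [if_neg (by omega), if_neg (by omega)]

lemma aEl_none {n : ℤ} : aEl T m n none = BT.one := rfl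

lemma betaEl_none {j : Fin 3} {Q : Cfg k} : betaEl T m j Q none = BT.P j := rfl

lemma qEl_eq_beta (j : Fin 3) : qEl T m j = betaEl T m j (Q0 k) := by
  funext y
  cases y with
  | none => rfl
  | some x => rfl

/-! ### BT-level isP lemmas -/

namespace BT

lemma isP_iff {x : BT k} : x.isP = true ↔ ∃ j, x = P j := by
  cases x <;> simp [isP]

lemma isP_T0 {x : BT k} (h : x.isP = false) : (T0 x).isP = false := by
  cases x with
  | P j => simp [isP] at h
  | C b i r s => cases b <;> simp only [T0] <;> first | rfl | (split_ifs <;> rfl)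
  | D b i r s => cases b <;> simp only [T0] <;> first | rfl | (split_ifs <;> rfl)
  | M b i r => cases b <;> simp only [T0] <;> first | rfl | (split_ifs <;> rfl)
  | zero => rfl
  | one => rfl
  | two => rfl
  | H => rfl

lemma isP_meet {x y : BT k} (h : x.isP = false) : (meet x y).isP = false := by
  unfold meet
  split_ifs with h1 h2 h3 h4
  · exact h
  · rw [h2.1] at h; simp [isP] at h
  · rcases h3.2 with h' | h' <;> rw [h'] at h <;> simp [isP] at h
  · rcases h4.1 with h' | h' <;> rw [h'] at h <;> simp [isP] at h
  · rfl

lemma isP_T1 {x y : BT k} (h : x.isP = false) : (T1 x y).isP = false := by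
  unfold T1
  split_ifs with h1 h2 h3
  · rcases h1 with ⟨h', _⟩ | ⟨h', _⟩ | ⟨h', _⟩ | ⟨h', _⟩ | ⟨h', _⟩ <;>
      rw [h'] at h <;> simp [isP] at h
  · rcases h2.1 with h' | h' <;> rw [h'] at h <;> simp [isP] at h
  · exact h
  · rfl

lemma isP_meetI {j : Fin 3} {x y : BT k} (h : x.isP = false) :
    (meetI j x y).isP = false := by
  unfold meetI; split_ifs with h1
  · exact h
  · rfl

lemma isP_J' {x y z : BT k} (h : x.isP = false) : (J' x y z).isP = false := by
  unfold J'
  split_ifs with h1 h2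
  · exact isP_meet h
  · exact h
  · rfl

lemma isP_S1 {u x y z : BT k} (h : x.isP = false) : (S1 u x y z).isP = false := by
  unfold S1
  split_ifs with h1 h2
  · exact h
  · rw [h2.1] at h; exact absurd h2.1 (by simp_all)
  · rfl

lemma isP_S2 {u v x y z : BT k} (h : x.isP = false) : (S2 u v x y z).isP = false := by
  unfold S2
  split_ifs with h1 h2
  · exact h
  · rw [h2.1] at h; exact absurd h2.1 (by simp_all)
  · rfl

lemma isVV_barOp_isP {v : BT k} (h : v.isVV = true) : (barOp v).isP = false := by
  cases v <;> simp_all [isVV, barOp, isP]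

end BT

lemma fwd_P (T : TM k) (i : Fin (k+1)) (r t : Bool) (x y : BT k) (j : Fin 3) :
    fwd T i r t x y (BT.P j) = BT.P j ∨ fwd T i r t x y (BT.P j) = BT.zero := by
  unfold fwd
  rcases h : T.instr i r with ⟨s, d, mm⟩
  cases d <;> simp only [BT.Lop, BT.Rop] <;> split_ifs <;> simp

lemma isP_fwd (T : TM k) (i : Fin (k+1)) (r t : Bool) {x y u : BT k}
    (h : u.isP = false) : (fwd T i r t x y u).isP = false := by
  unfold fwd
  rcases hi : T.instr i r with ⟨s, d, mm⟩
  cases d <;> cases u <;> simp_all [BT.Lop, BT.Rop, BT.isP] <;> split_ifs <;>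
    simp [BT.isP]

lemma isP_revOp_fwd (T : TM k) (i : Fin (k+1)) (r t : Bool) {x y u : BT k}
    (h : u.isP = false) : (revOp (fwd T i r t) x y u).isP = false := by
  unfold revOp
  by_cases hh : u ≠ BT.zero ∧ ∃ v, fwd T i r t x y v = u
  · rw [dif_pos hh]
    have hs := hh.2.choose_spec
    by_contra hp
    rw [Bool.not_eq_false] at hp
    obtain ⟨j, hj⟩ := BT.isP_iff.1 hp
    rw [hj] at hs
    rcases fwd_P T i r t x y j with h' | h' <;> rw [hs] at h'
    · rw [h'] at h; simp [BT.isP] at h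
    · exact hh.1 h' 
  · rw [dif_neg hh]; rfl

lemma isP_mop (T : TM k) (i : Fin (k+1)) (r t b : Bool) {x y u : BT k}
    (h : u.isP = false) : (mop T i r t b x y u).isP = false := by
  cases b
  · exact isP_fwd T i r t h
  · exact isP_revOp_fwd T i r t h

lemma isP_U1 {F : BT k → BT k → BT k → BT k}
    (hF : ∀ x y u, u.isP = false → (F x y u).isP = false) {x y z u : BT k}
    (h : u.isP = false) : (U1op F x y z u).isP = false := by
  unfold U1op
  split_ifs with h1 h2
  · exact BT.isVV_barOp_isP h1.2.2.2
  · exact hF _ _ _ h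
  · rfl

lemma isP_U2 {F : BT k → BT k → BT k → BT k}
    (hF : ∀ x y u, u.isP = false → (F x y u).isP = false) {x y z u : BT k}
    (h : u.isP = false) : (U2op F x y z u).isP = false := by
  unfold U2op
  split_ifs with h1 h2
  · exact BT.isVV_barOp_isP h1.2.2.2
  · exact hF _ _ _ h
  · rfl

/-- no element of K takes a value in P at a coordinate of N -/
lemma inK_noP {f : AA T m} (hf : InK T m f) :
    ∀ x : {x : ℤ // x ∈ Nset T m}, (f (some x)).isP = false := by
  induction hf with
  | gen_a n hn => intro x; unfold aEl; simp only; split_ifs <;> rfl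
  | gen_q j => intro x; unfold qEl; simp only; split_ifs <;> rfl
  | zeroOp => intro x; rfl
  | t0 _ ih => intro x; exact BT.isP_T0 (ih x)
  | t1 _ _ ih1 ih2 => intro x; exact BT.isP_T1 (ih1 x)
  | meet _ _ ih1 ih2 => intro x; exact BT.isP_meet (ih1 x)
  | meetI j _ _ ih1 ih2 => intro x; exact BT.isP_meetI (ih1 x)
  | jop _ _ _ ih1 ih2 ih3 => intro x; exact BT.isP_J' (ih1 x)
  | s1 _ _ _ _ ih1 ih2 ih3 ih4 => intro x; exact BT.isP_S1 (ih2 x)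
  | s2 _ _ _ _ _ ih1 ih2 ih3 ih4 ih5 => intro x; exact BT.isP_S2 (ih3 x)
  | mach i hi r t b _ _ _ ih1 ih2 ih3 => intro x; exact isP_mop T i r t b (ih3 x)
  | u1 i hi r t b _ _ _ _ ih1 ih2 ih3 ih4 =>
    intro x; exact isP_U1 (fun _ _ _ h => isP_mop T i r t b h) (ih4 x)
  | u2 i hi r t b _ _ _ _ ih1 ih2 ih3 ih4 =>
    intro x; exact isP_U2 (fun _ _ _ h => isP_mop T i r t b h) (ih4 x)

end Lemma41c
section Lemma41d
variable {k : ℕ} {T : TM k} {m : ℕ}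

/-! ### revOp generic lemmas -/

lemma revOp_eq {F : BT k → BT k → BT k → BT k} {x y u v₀ : BT k}
    (h0 : F x y v₀ = u) (hu : u ≠ BT.zero)
    (huniq : ∀ v, F x y v = u → v = v₀) : revOp F x y u = v₀ := by
  unfold revOp
  rw [dif_pos ⟨hu, v₀, h0⟩]
  exact huniq _ (Exists.choose_spec (⟨v₀, h0⟩ : ∃ v, F x y v = u))

lemma revOp_zero {F : BT k → BT k → BT k → BT k} {x y : BT k} :
    revOp F x y BT.zero = BT.zero := by
  unfold revOp
  rw [dif_neg]
  rintro ⟨h, -⟩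
  exact h rfl

lemma revOp_no {F : BT k → BT k → BT k → BT k} {x y u : BT k}
    (h : ∀ v, F x y v ≠ u) : revOp F x y u = BT.zero := by
  unfold revOp
  rw [dif_neg]
  rintro ⟨-, v, hv⟩
  exact h v hv

/-! ### injectivity of the machine operations in the third argument -/

lemma Lop_inj (i : Fin (k+1)) (r s : Bool) (mst : Fin (k+1)) (t : Bool)
    {x y v v' : BT k} (h : BT.Lop i r s mst t x y v = BT.Lop i r s mst t x y v')
    (hne : BT.Lop i r s mst t x y v ≠ BT.zero) : v = v' := by
  cases v <;> cases v' <;> simp only [BT.Lop] at h hne <;>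
    first
    | exact absurd rfl hne
    | (split_ifs at h hne <;> simp_all)
    | simp_all

lemma Rop_inj (i : Fin (k+1)) (r s : Bool) (mst : Fin (k+1)) (t : Bool)
    {x y v v' : BT k} (h : BT.Rop i r s mst t x y v = BT.Rop i r s mst t x y v')
    (hne : BT.Rop i r s mst t x y v ≠ BT.zero) : v = v' := by
  cases v <;> cases v' <;> simp only [BT.Rop] at h hne <;>
    first
    | exact absurd rfl hne
    | (split_ifs at h hne <;> simp_all)
    | simp_all

lemma fwd_inj (T : TM k) (i : Fin (k+1)) (r t : Bool) {x y v v' : BT k}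
    (h : fwd T i r t x y v = fwd T i r t x y v')
    (hne : fwd T i r t x y v ≠ BT.zero) : v = v' := by
  unfold fwd at h hne
  rcases hins : T.instr i r with ⟨s, d, mst⟩
  rw [hins] at h hne
  cases d
  · exact Lop_inj i r s mst t h hne
  · exact Rop_inj i r s mst t h hne

lemma revOp_fwd_eq (T : TM k) (i : Fin (k+1)) (r t : Bool) {x y u v₀ : BT k}
    (h0 : fwd T i r t x y v₀ = u) (hu : u ≠ BT.zero) :
    revOp (fwd T i r t) x y u = v₀ :=
  revOp_eq h0 hu (fun v hv => fwd_inj T i r t (hv.trans h0.symm) (hv.symm ▸ hu))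

/-! ### forward simulation -/

lemma cfgStep_L {Q : Cfg k} (hst : Q.state ≠ 0) {s : Bool} {mst : Fin (k+1)}
    (hins : T.instr Q.state (Q.tape Q.pos) = (s, Dir.L, mst)) :
    cfgStep T Q = ⟨Function.update Q.tape Q.pos s, Q.pos - 1, mst⟩ := by
  unfold cfgStep
  rw [if_neg hst, hins]

lemma cfgStep_R {Q : Cfg k} (hst : Q.state ≠ 0) {s : Bool} {mst : Fin (k+1)}
    (hins : T.instr Q.state (Q.tape Q.pos) = (s, Dir.R, mst)) :
    cfgStep T Q = ⟨Function.update Q.tape Q.pos s, Q.pos + 1, mst⟩ := by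
  unfold cfgStep
  rw [if_neg hst, hins]

lemma fwd_sim_L (j : Fin 3) {Q : Cfg k} (hst : Q.state ≠ 0) {s : Bool}
    {mst : Fin (k+1)} (hins : T.instr Q.state (Q.tape Q.pos) = (s, Dir.L, mst)) :
    (fun y => fwd T Q.state (Q.tape Q.pos) (Q.tape (Q.pos - 1))
        (aEl T m (Q.pos - 1) y) (aEl T m Q.pos y) (betaEl T m j Q y))
      = betaEl T m j (cfgStep T Q) := by
  rw [cfgStep_L hst hins]
  funext y
  rcases y with _ | x
  · simp [aEl, betaEl, fwd, hins, BT.Lop]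
  · rcases lt_trichotomy x.1 (Q.pos - 1) with hx | hx | hx
    · rw [aEl_some_lt (by omega), aEl_some_lt (by omega), betaEl_some_lt (by omega),
        betaEl_some_lt (show x.1 < Q.pos - 1 from hx)]
      simp only [fwd, hins, BT.Lop]
      rw [Function.update_of_ne (by omega), Function.update_of_ne (by omega)]
      simp
    · rw [aEl_some_eq hx, aEl_some_lt (by omega), betaEl_some_lt (by omega),
        betaEl_some_eq (show x.1 = Q.pos - 1 from hx)]
      simp only [fwd, hins, BT.Lop]
      rw [Function.update_of_ne (by omega)]
      rw [hx]
      simp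
    · rcases eq_or_lt_of_le (show Q.pos ≤ x.1 by omega) with hx' | hx'
      · rw [aEl_some_gt (by omega), aEl_some_eq hx'.symm, betaEl_some_eq hx'.symm,
          betaEl_some_gt (show (Q.pos : ℤ) - 1 < x.1 by omega)]
        simp only [fwd, hins, BT.Lop]
        rw [Function.update_of_ne (by omega), ← hx', Function.update_self]
        simp
      · rw [aEl_some_gt (by omega), aEl_some_gt (by omega), betaEl_some_gt hx',
          betaEl_some_gt (show (Q.pos : ℤ) - 1 < x.1 by omega)]
        simp only [fwd, hins, BT.Lop]
        rw [Function.update_of_ne (by omega), Function.update_of_ne (by omega)]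
        simp

lemma fwd_sim_R (j : Fin 3) {Q : Cfg k} (hst : Q.state ≠ 0) {s : Bool}
    {mst : Fin (k+1)} (hins : T.instr Q.state (Q.tape Q.pos) = (s, Dir.R, mst)) :
    (fun y => fwd T Q.state (Q.tape Q.pos) (Q.tape (Q.pos + 1))
        (aEl T m Q.pos y) (aEl T m (Q.pos + 1) y) (betaEl T m j Q y))
      = betaEl T m j (cfgStep T Q) := by
  rw [cfgStep_R hst hins]
  funext y
  rcases y with _ | x
  · simp [aEl, betaEl, fwd, hins, BT.Rop]
  · rcases lt_trichotomy x.1 Q.pos with hx | hx | hx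
    · rw [aEl_some_lt (by omega), aEl_some_lt (by omega), betaEl_some_lt (by omega),
        betaEl_some_lt (show x.1 < Q.pos + 1 by omega)]
      simp only [fwd, hins, BT.Rop]
      rw [Function.update_of_ne (by omega), Function.update_of_ne (by omega)]
      simp
    · rw [aEl_some_eq hx, aEl_some_lt (by omega), betaEl_some_eq hx,
        betaEl_some_lt (show x.1 < Q.pos + 1 by omega)]
      simp only [fwd, hins, BT.Rop]
      rw [Function.update_of_ne (by omega), hx, Function.update_self]
      simp
    · rcases eq_or_lt_of_le (show Q.pos + 1 ≤ x.1 by omega) with hx' | hx'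
      · rw [aEl_some_gt (by omega), aEl_some_eq hx'.symm, betaEl_some_gt (by omega),
          betaEl_some_eq hx'.symm]
        simp only [fwd, hins, BT.Rop]
        rw [Function.update_of_ne (by omega : (Q.pos : ℤ) + 1 ≠ Q.pos), ← hx']
        simp
      · rw [aEl_some_gt (by omega), aEl_some_gt (by omega), betaEl_some_gt (by omega),
          betaEl_some_gt (show (Q.pos : ℤ) + 1 < x.1 from hx')]
        simp only [fwd, hins, BT.Rop]
        rw [Function.update_of_ne (by omega), Function.update_of_ne (by omega)]
        simp

end Lemma41d
section Lemma41e
variable {k : ℕ} {T : TM k} {m : ℕ}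

lemma rev_sim_L (j : Fin 3) {Q : Cfg k} {i : Fin (k+1)} {r s t : Bool}
    {mst : Fin (k+1)} (hins : T.instr i r = (s, Dir.L, mst))
    (hσ : Q.state = mst) (ht : Q.tape Q.pos = t) (hs : Q.tape (Q.pos + 1) = s) :
    (fun y => revOp (fwd T i r t) (aEl T m Q.pos y) (aEl T m (Q.pos + 1) y)
        (betaEl T m j Q y))
      = betaEl T m j ⟨Function.update Q.tape (Q.pos + 1) r, Q.pos + 1, i⟩ := by
  funext y
  rcases y with _ | x
  · rw [aEl_none, aEl_none, betaEl_none, betaEl_none]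
    exact revOp_fwd_eq T i r t (by simp [fwd, hins, BT.Lop]) (by simp)
  · rcases lt_trichotomy x.1 Q.pos with hx | hx | hx
    · rw [aEl_some_lt hx, aEl_some_lt (by omega), betaEl_some_lt hx, hσ, ht,
        betaEl_some_lt (show x.1 < (Q.pos + 1 : ℤ) by omega)]
      show _ = BT.C false i (Function.update Q.tape (Q.pos+1) r (Q.pos+1))
        (Function.update Q.tape (Q.pos+1) r x.1)
      rw [Function.update_self, Function.update_of_ne (by omega)]
      exact revOp_fwd_eq T i r t (by simp [fwd, hins, BT.Lop]) (by simp)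
    · rw [aEl_some_eq hx, aEl_some_lt (by omega), betaEl_some_eq hx, hσ, ht,
        betaEl_some_lt (show x.1 < (Q.pos + 1 : ℤ) by omega)]
      show _ = BT.C false i (Function.update Q.tape (Q.pos+1) r (Q.pos+1))
        (Function.update Q.tape (Q.pos+1) r x.1)
      rw [Function.update_self, Function.update_of_ne (by omega), hx, ht]
      exact revOp_fwd_eq T i r t (by simp [fwd, hins, BT.Lop]) (by simp)
    · rcases eq_or_lt_of_le (show Q.pos + 1 ≤ x.1 by omega) with hx' | hx'
      · rw [aEl_some_gt (by omega), aEl_some_eq hx'.symm, betaEl_some_gt hx, hσ, ht,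
          ← hx', hs, betaEl_some_eq hx'.symm]
        show _ = BT.M false i (Function.update Q.tape (Q.pos+1) r (Q.pos+1))
        rw [Function.update_self]
        exact revOp_fwd_eq T i r t (by simp [fwd, hins, BT.Lop]) (by simp)
      · rw [aEl_some_gt (by omega), aEl_some_gt hx', betaEl_some_gt hx, hσ, ht,
          betaEl_some_gt (show (Q.pos + 1 : ℤ) < x.1 from hx')]
        show _ = BT.D false i (Function.update Q.tape (Q.pos+1) r (Q.pos+1))
          (Function.update Q.tape (Q.pos+1) r x.1)
        rw [Function.update_self, Function.update_of_ne (by omega)]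
        exact revOp_fwd_eq T i r t (by simp [fwd, hins, BT.Lop]) (by simp)

lemma rev_sim_R (j : Fin 3) {Q : Cfg k} {i : Fin (k+1)} {r s t : Bool}
    {mst : Fin (k+1)} (hins : T.instr i r = (s, Dir.R, mst))
    (hσ : Q.state = mst) (ht : Q.tape Q.pos = t) (hs : Q.tape (Q.pos - 1) = s) :
    (fun y => revOp (fwd T i r t) (aEl T m (Q.pos - 1) y) (aEl T m Q.pos y)
        (betaEl T m j Q y))
      = betaEl T m j ⟨Function.update Q.tape (Q.pos - 1) r, Q.pos - 1, i⟩ := by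
  funext y
  rcases y with _ | x
  · rw [aEl_none, aEl_none, betaEl_none, betaEl_none]
    exact revOp_fwd_eq T i r t (by simp [fwd, hins, BT.Rop]) (by simp)
  · rcases lt_trichotomy x.1 (Q.pos - 1) with hx | hx | hx
    · rw [aEl_some_lt hx, aEl_some_lt (by omega), betaEl_some_lt (by omega), hσ, ht,
        betaEl_some_lt (show x.1 < (Q.pos - 1 : ℤ) from hx)]
      show _ = BT.C false i (Function.update Q.tape (Q.pos-1) r (Q.pos-1))
        (Function.update Q.tape (Q.pos-1) r x.1)
      rw [Function.update_self, Function.update_of_ne (by omega)]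
      exact revOp_fwd_eq T i r t (by simp [fwd, hins, BT.Rop]) (by simp)
    · rw [aEl_some_eq hx, aEl_some_lt (by omega), betaEl_some_lt (by omega), hσ, ht,
        hx, hs, betaEl_some_eq hx]
      show _ = BT.M false i (Function.update Q.tape (Q.pos-1) r (Q.pos-1))
      rw [Function.update_self]
      exact revOp_fwd_eq T i r t (by simp [fwd, hins, BT.Rop]) (by simp)
    · rcases eq_or_lt_of_le (show Q.pos ≤ x.1 by omega) with hx' | hx'
      · rw [aEl_some_gt (by omega), aEl_some_eq hx'.symm, betaEl_some_eq hx'.symm, hσ, ht,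
          betaEl_some_gt (show (Q.pos - 1 : ℤ) < x.1 by omega)]
        show _ = BT.D false i (Function.update Q.tape (Q.pos-1) r (Q.pos-1))
          (Function.update Q.tape (Q.pos-1) r x.1)
        rw [Function.update_self, Function.update_of_ne (by omega), ← hx', ht]
        exact revOp_fwd_eq T i r t (by simp [fwd, hins, BT.Rop]) (by simp)
      · rw [aEl_some_gt (by omega), aEl_some_gt hx', betaEl_some_gt (by omega), hσ, ht,
          betaEl_some_gt (show (Q.pos - 1 : ℤ) < x.1 by omega)]
        show _ = BT.D false i (Function.update Q.tape (Q.pos-1) r (Q.pos-1))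
          (Function.update Q.tape (Q.pos-1) r x.1)
        rw [Function.update_self, Function.update_of_ne (by omega)]
        exact revOp_fwd_eq T i r t (by simp [fwd, hins, BT.Rop]) (by simp)

lemma beta_step (j : Fin 3) {Q : Cfg k} (hst : Q.state ≠ 0) (hp1 : Q.pos ∈ Nset T m)
    (hp2 : (cfgStep T Q).pos ∈ Nset T m) (hb : InK T m (betaEl T m j Q)) :
    InK T m (betaEl T m j (cfgStep T Q)) := by
  rcases hins : T.instr Q.state (Q.tape Q.pos) with ⟨s, d, mst⟩
  cases d
  · rw [← fwd_sim_L j hst hins]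
    have hp2' : Q.pos - 1 ∈ Nset T m := by rw [cfgStep_L hst hins] at hp2; exact hp2
    exact InK.mach Q.state hst (Q.tape Q.pos) (Q.tape (Q.pos - 1)) false
      (InK.gen_a _ hp2') (InK.gen_a _ hp1) hb
  · rw [← fwd_sim_R j hst hins]
    have hp2' : Q.pos + 1 ∈ Nset T m := by rw [cfgStep_R hst hins] at hp2; exact hp2
    exact InK.mach Q.state hst (Q.tape Q.pos) (Q.tape (Q.pos + 1)) false
      (InK.gen_a _ hp1) (InK.gen_a _ hp2') hb

lemma betaKm (j : Fin 3) : ∀ l, l ≤ m → InK T m (betaEl T m j ((cfgStep T)^[l] (Q0 k))) := by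
  intro l
  induction l with
  | zero =>
    intro _
    rw [Function.iterate_zero_apply, ← qEl_eq_beta]
    exact InK.gen_q j
  | succ l ih =>
    intro hl
    rw [Function.iterate_succ_apply']
    by_cases hst : ((cfgStep T)^[l] (Q0 k)).state = 0
    · rw [cfgStep_halt T hst]; exact ih (Nat.le_of_succ_le hl)
    · have hp2 : (cfgStep T ((cfgStep T)^[l] (Q0 k))).pos ∈ Nset T m := by
        have h := mem_Nset_pos T m hl
        unfold posAt at h
        rwa [Function.iterate_succ_apply'] at h
      exact beta_step j hst (mem_Nset_pos T m (Nat.le_of_succ_le hl)) hp2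
        (ih (Nat.le_of_succ_le hl))

lemma beta_mem_aux (j : Fin 3) :
    ∀ (n : ℕ) (Q : Cfg k), (cfgStep T)^[n] Q = (cfgStep T)^[m] (Q0 k) →
      (∀ l ≤ n, ((cfgStep T)^[l] Q).pos ∈ Nset T m) → InK T m (betaEl T m j Q) := by
  intro n
  induction n with
  | zero =>
    intro Q hn _
    rw [Function.iterate_zero_apply] at hn
    rw [hn]
    exact betaKm j m le_rfl
  | succ n ih =>
    intro Q hn hposs
    by_cases hst : Q.state = 0
    · refine ih Q ?_ (fun l hl => hposs l (Nat.le_succ_of_le hl))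
      rwa [Function.iterate_succ_apply, cfgStep_halt T hst] at hn
    · have hQ'' : InK T m (betaEl T m j (cfgStep T Q)) := by
        refine ih (cfgStep T Q) ?_ ?_
        · rwa [← Function.iterate_succ_apply]
        · intro l hl
          rw [← Function.iterate_succ_apply]
          exact hposs (l+1) (Nat.succ_le_succ hl)
      have hp0 : Q.pos ∈ Nset T m := hposs 0 (Nat.zero_le _)
      have hp1 : (cfgStep T Q).pos ∈ Nset T m := by
        have := hposs 1 (Nat.one_le_iff_ne_zero.2 (Nat.succ_ne_zero n))
        rwa [Function.iterate_one] at this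
      rcases hins : T.instr Q.state (Q.tape Q.pos) with ⟨s, d, mst⟩
      cases d
      · -- instruction moves Left; the successor is Q'' = ⟨update tape pos s, pos-1, mst⟩
        have hQeq : cfgStep T Q = ⟨Function.update Q.tape Q.pos s, Q.pos - 1, mst⟩ :=
          cfgStep_L hst hins
        have hσ : (cfgStep T Q).state = mst := by rw [hQeq]
        have hposeq : (cfgStep T Q).pos + 1 = Q.pos := by rw [hQeq]; show Q.pos - 1 + 1 = Q.pos; ring
        have hs' : (cfgStep T Q).tape ((cfgStep T Q).pos + 1) = s := by
          rw [hQeq]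
          show Function.update Q.tape Q.pos s (Q.pos - 1 + 1) = s
          rw [show Q.pos - 1 + 1 = Q.pos by ring, Function.update_self]
        have hfun := rev_sim_L (T := T) (m := m) j (Q := cfgStep T Q) hins hσ rfl hs'
        have hpred : (⟨Function.update (cfgStep T Q).tape ((cfgStep T Q).pos + 1)
            (Q.tape Q.pos), (cfgStep T Q).pos + 1, Q.state⟩ : Cfg k) = Q := by
          rw [hQeq]
          show (⟨Function.update (Function.update Q.tape Q.pos s) (Q.pos - 1 + 1)
            (Q.tape Q.pos), Q.pos - 1 + 1, Q.state⟩ : Cfg k) = Q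
          rw [show Q.pos - 1 + 1 = Q.pos by ring, Function.update_idem,
            Function.update_eq_self]
        rw [hpred] at hfun
        rw [← hfun]
        have hmem1 : (cfgStep T Q).pos + 1 ∈ Nset T m := by rw [hposeq]; exact hp0
        exact InK.mach Q.state hst (Q.tape Q.pos) ((cfgStep T Q).tape (cfgStep T Q).pos)
          true (InK.gen_a _ hp1) (InK.gen_a _ hmem1) hQ''
      · have hQeq : cfgStep T Q = ⟨Function.update Q.tape Q.pos s, Q.pos + 1, mst⟩ :=
          cfgStep_R hst hins
        have hσ : (cfgStep T Q).state = mst := by rw [hQeq]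
        have hposeq : (cfgStep T Q).pos - 1 = Q.pos := by rw [hQeq]; show Q.pos + 1 - 1 = Q.pos; ring
        have hs' : (cfgStep T Q).tape ((cfgStep T Q).pos - 1) = s := by
          rw [hQeq]
          show Function.update Q.tape Q.pos s (Q.pos + 1 - 1) = s
          rw [show Q.pos + 1 - 1 = Q.pos by ring, Function.update_self]
        have hfun := rev_sim_R (T := T) (m := m) j (Q := cfgStep T Q) hins hσ rfl hs'
        have hpred : (⟨Function.update (cfgStep T Q).tape ((cfgStep T Q).pos - 1)
            (Q.tape Q.pos), (cfgStep T Q).pos - 1, Q.state⟩ : Cfg k) = Q := by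
          rw [hQeq]
          show (⟨Function.update (Function.update Q.tape Q.pos s) (Q.pos + 1 - 1)
            (Q.tape Q.pos), Q.pos + 1 - 1, Q.state⟩ : Cfg k) = Q
          rw [show Q.pos + 1 - 1 = Q.pos by ring, Function.update_idem,
            Function.update_eq_self]
        rw [hpred] at hfun
        rw [← hfun]
        have hmem1 : (cfgStep T Q).pos - 1 ∈ Nset T m := by rw [hposeq]; exact hp0
        exact InK.mach Q.state hst (Q.tape Q.pos) ((cfgStep T Q).tape (cfgStep T Q).pos)
          true (InK.gen_a _ hmem1) (InK.gen_a _ hp1) hQ''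

lemma beta_mem (j : Fin 3) {Q : Cfg k} (hQ : InCfgStar T m Q) :
    InK T m (betaEl T m j Q) := by
  obtain ⟨n, hn, hposs⟩ := hQ
  exact beta_mem_aux j n Q hn hposs

end Lemma41e
section Lemma41f
variable {k : ℕ} {T : TM k} {m : ℕ}

namespace BT

/-- barred elements -/
def isBar : BT k → Bool
  | C true _ _ _ => true
  | D true _ _ _ => true
  | M true _ _ => true
  | _ => false

lemma meet_self {x : BT k} : meet x x = x := by unfold meet; rw [if_pos rfl]

lemma meet_zero_left {y : BT k} : meet zero y = zero := by
  unfold meet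
  split_ifs with h1 h2 h3 h4 <;> first | rfl | simp_all

lemma meet_zero_right {x : BT k} : meet x zero = zero := by
  unfold meet
  split_ifs with h1 h2 h3 h4 <;> first | exact h1 | rfl | simp_all

lemma meet_ne {x y : BT k} (hne : x ≠ y) (hx : x.isP = false) : meet x y = zero := by
  unfold meet
  split_ifs with h1 h2 h3 h4
  · exact absurd h1 hne
  · rw [h2.1] at hx; simp [isP] at hx
  · rcases h3.2 with h' | h' <;> rw [h'] at hx <;> simp [isP] at hx
  · rcases h4.1 with h' | h' <;> rw [h'] at hx <;> simp [isP] at hx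
  · rfl

lemma meet_P {j1 j2 : Fin 3} :
    meet (P j1 : BT k) (P j2) = P (if j1 = j2 then j1 else 2) := by
  fin_cases j1 <;> fin_cases j2 <;> simp [meet]

lemma isV10_iff {x : BT k} : x.isV10 = true ↔
    x = C false 1 false false ∨ x = M false 1 false ∨ x = D false 1 false false := by
  unfold isV10
  simp [or_assoc]

lemma T1_eq_zero {x y : BT k} (hx : x.isP = false) (h : x ≠ y ∨ x.isV10 = false) :
    T1 x y = zero := by
  unfold T1
  split_ifs with h1 h2 h3
  · rcases h1 with ⟨h', _⟩ | ⟨h', _⟩ | ⟨h', _⟩ | ⟨h', _⟩ | ⟨h', _⟩ <;>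
      rw [h'] at hx <;> simp [isP] at hx
  · rcases h2.1 with h' | h' <;> rw [h'] at hx <;> simp [isP] at hx
  · rcases h with h | h
    · exact absurd h3.1 h
    · rw [h3.2] at h; cases h
  · rfl

lemma T1_self_V10 {x : BT k} (h : x.isV10 = true) : T1 x x = x := by
  rcases isV10_iff.1 h with rfl | rfl | rfl <;> simp [T1, isV10]

lemma T1_P {j1 j2 : Fin 3} :
    T1 (P j1 : BT k) (P j2) = P (if j1 = 0 ∨ j2 = 0 then 1 else 2) := by
  fin_cases j1 <;> fin_cases j2 <;> simp [T1]

lemma J'_cond1 {x y z : BT k} (c1 : x = y ∨ (x.isP = true ∧ y.isP = true)) :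
    J' x y z = meet x z := by
  unfold J'
  rw [if_pos (by simpa using c1)]

lemma J'_off {x y z : BT k} (h1 : ¬(x = y ∨ (x.isP = true ∧ y.isP = true)))
    (h2 : ¬(y.isVV = true ∧ x = barOp y)) : J' x y z = zero := by
  unfold J'
  rw [if_neg (by simpa using h1), if_neg (by simpa using h2)]

lemma J'_zero_left {y z : BT k} : J' zero y z = zero := by
  unfold J'
  split_ifs with h1 h2
  · exact meet_zero_left
  · rfl
  · rfl

lemma S1_off {u x y z : BT k} (h1 : ¬(u = one ∨ u = two)) (h2 : x.isP = false) :
    S1 u x y z = zero := by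
  unfold S1
  split_ifs with c1 c2
  · exact absurd c1.1 h1
  · rw [c2.1] at h2; cases h2
  · rfl

lemma S2_off {u v x y z : BT k} (h1 : ¬(v.isVV = true ∧ u = barOp v))
    (h2 : x.isP = false) : S2 u v x y z = zero := by
  unfold S2
  split_ifs with c1 c2
  · exact absurd ⟨c1.1, c1.2.1⟩ h1
  · rw [c2.1] at h2; cases h2
  · rfl

lemma isBar_barOp {y : BT k} (hy : y.isVV = true) (hb : y.isBar = false) :
    (barOp y).isBar = true := by
  cases y with
  | C b i r s => cases b <;> simp_all [isBar, barOp]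
  | D b i r s => cases b <;> simp_all [isBar, barOp]
  | M b i r => cases b <;> simp_all [isBar, barOp]
  | _ => simp [isVV] at hy

lemma ne_barOp {x y : BT k} (hy : y.isVV = true) (hb : y.isBar = false)
    (hx : x.isBar = false) : x ≠ barOp y := by
  intro he
  have h2 := isBar_barOp hy hb
  rw [← he] at h2
  rw [hx] at h2
  cases h2

lemma barOp_ne_zero {y : BT k} (hy : y.isVV = true) : barOp y ≠ zero := by
  cases y <;> simp_all [isVV, barOp]

end BT

/-! ### aEl/betaEl value facts -/

lemma aEl_isP {n : ℤ} {x : {x : ℤ // x ∈ Nset T m}} :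
    ((aEl T m n) (some x)).isP = false := by
  unfold aEl; simp only; split_ifs <;> rfl

lemma aEl_isVV {n : ℤ} {x : {x : ℤ // x ∈ Nset T m}} :
    ((aEl T m n) (some x)).isVV = false := by
  unfold aEl; simp only; split_ifs <;> rfl

lemma aEl_isU {n : ℤ} {x : {x : ℤ // x ∈ Nset T m}} :
    ((aEl T m n) (some x)).isU = true := by
  unfold aEl; simp only; split_ifs <;> rfl

lemma aEl_isBar {n : ℤ} {x : {x : ℤ // x ∈ Nset T m}} :
    ((aEl T m n) (some x)).isBar = false := by
  unfold aEl; simp only; split_ifs <;> rfl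

lemma aEl_isV10 {n : ℤ} {x : {x : ℤ // x ∈ Nset T m}} :
    ((aEl T m n) (some x)).isV10 = false := by
  unfold aEl; simp only; split_ifs <;> rfl

lemma aEl_ne_zero {n : ℤ} {x : {x : ℤ // x ∈ Nset T m}} :
    (aEl T m n) (some x) ≠ BT.zero := by
  unfold aEl; simp only; split_ifs <;> simp

lemma betaEl_isP {j : Fin 3} {Q : Cfg k} {x : {x : ℤ // x ∈ Nset T m}} :
    ((betaEl T m j Q) (some x)).isP = false := by
  unfold betaEl; simp only; split_ifs <;> rfl

lemma betaEl_isVV {j : Fin 3} {Q : Cfg k} {x : {x : ℤ // x ∈ Nset T m}} :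
    ((betaEl T m j Q) (some x)).isVV = true := by
  unfold betaEl; simp only; split_ifs <;> rfl

lemma betaEl_isU {j : Fin 3} {Q : Cfg k} {x : {x : ℤ // x ∈ Nset T m}} :
    ((betaEl T m j Q) (some x)).isU = false := by
  unfold betaEl; simp only; split_ifs <;> rfl

lemma betaEl_isBar {j : Fin 3} {Q : Cfg k} {x : {x : ℤ // x ∈ Nset T m}} :
    ((betaEl T m j Q) (some x)).isBar = false := by
  unfold betaEl; simp only; split_ifs <;> rfl

lemma betaEl_ne_zero {j : Fin 3} {Q : Cfg k} {x : {x : ℤ // x ∈ Nset T m}} :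
    (betaEl T m j Q) (some x) ≠ BT.zero := by
  unfold betaEl; simp only; split_ifs <;> simp

lemma betaEl_j_irrel {j j' : Fin 3} {Q : Cfg k} {x : {x : ℤ // x ∈ Nset T m}} :
    (betaEl T m j Q) (some x) = (betaEl T m j' Q) (some x) := rfl

/-! ### prec facts -/

lemma prec_left_false {x y : BT k} (hx : x.isU = false) : prec x y = false := by
  cases x <;> cases y <;> simp_all [BT.isU, prec]

lemma prec_right_false {x y : BT k} (hy : y.isU = false) : prec x y = false := by
  cases x <;> cases y <;> simp_all [BT.isU, prec]

end Lemma41f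
section Lemma41g
variable {k : ℕ} {T : TM k} {m : ℕ}

lemma fwd_xU {x y u : BT k} (hx : x.isU = false) (T : TM k) (i : Fin (k+1))
    (r t : Bool) : fwd T i r t x y u = BT.zero := by
  have h1 : x ≠ BT.one := fun h => by rw [h] at hx; cases hx
  have h2 : x ≠ BT.two := fun h => by rw [h] at hx; cases hx
  have h3 : x ≠ BT.H := fun h => by rw [h] at hx; cases hx
  unfold fwd
  rcases hins : T.instr i r with ⟨s, d, mst⟩
  cases d <;> cases u <;> simp only [BT.Lop, BT.Rop] <;>
    first | rfl | (split_ifs <;> simp_all)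

lemma fwd_yU {x y u : BT k} (hy : y.isU = false) (T : TM k) (i : Fin (k+1))
    (r t : Bool) : fwd T i r t x y u = BT.zero := by
  have h1 : y ≠ BT.one := fun h => by rw [h] at hy; cases hy
  have h2 : y ≠ BT.two := fun h => by rw [h] at hy; cases hy
  have h3 : y ≠ BT.H := fun h => by rw [h] at hy; cases hy
  unfold fwd
  rcases hins : T.instr i r with ⟨s, d, mst⟩
  cases d <;> cases u <;> simp only [BT.Lop, BT.Rop] <;>
    first | rfl | (split_ifs <;> simp_all)

lemma fwd_u0 {x y : BT k} (T : TM k) (i : Fin (k+1)) (r t : Bool) :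
    fwd T i r t x y BT.zero = BT.zero := by
  unfold fwd
  rcases hins : T.instr i r with ⟨s, d, mst⟩
  cases d <;> rfl

lemma fwd_uU {x y u : BT k} (hu : u.isU = true) (T : TM k) (i : Fin (k+1))
    (r t : Bool) : fwd T i r t x y u = BT.zero := by
  unfold fwd
  rcases hins : T.instr i r with ⟨s, d, mst⟩
  cases d <;> cases u <;> first | rfl | (simp [BT.isU] at hu)

lemma isU_fwd {x y u : BT k} (T : TM k) (i : Fin (k+1)) (r t : Bool) :
    (fwd T i r t x y u).isU = false := by
  unfold fwd
  rcases hins : T.instr i r with ⟨s, d, mst⟩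
  cases d <;> cases u <;> simp only [BT.Lop, BT.Rop] <;>
    first | rfl | (split_ifs <;> rfl)

lemma mop_false_eq (T : TM k) (i : Fin (k+1)) (r t : Bool) :
    mop T i r t false = fwd T i r t := rfl

lemma mop_true_eq (T : TM k) (i : Fin (k+1)) (r t : Bool) :
    mop T i r t true = revOp (fwd T i r t) := rfl

lemma mop_xU {x y u : BT k} (hx : x.isU = false) (T : TM k) (i : Fin (k+1))
    (r t b : Bool) : mop T i r t b x y u = BT.zero := by
  cases b
  · exact fwd_xU hx T i r t
  · rw [mop_true_eq]
    by_cases hu : u = BT.zero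
    · rw [hu]; exact revOp_zero
    · refine revOp_no fun v hv => hu ?_
      rw [← hv, fwd_xU hx T i r t]

lemma mop_yU {x y u : BT k} (hy : y.isU = false) (T : TM k) (i : Fin (k+1))
    (r t b : Bool) : mop T i r t b x y u = BT.zero := by
  cases b
  · exact fwd_yU hy T i r t
  · rw [mop_true_eq]
    by_cases hu : u = BT.zero
    · rw [hu]; exact revOp_zero
    · refine revOp_no fun v hv => hu ?_
      rw [← hv, fwd_yU hy T i r t]

lemma mop_u0 {x y : BT k} (T : TM k) (i : Fin (k+1)) (r t b : Bool) :
    mop T i r t b x y BT.zero = BT.zero := by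
  cases b
  · exact fwd_u0 T i r t
  · exact revOp_zero

lemma mop_uU {x y u : BT k} (hu : u.isU = true) (T : TM k) (i : Fin (k+1))
    (r t b : Bool) : mop T i r t b x y u = BT.zero := by
  cases b
  · exact fwd_uU hu T i r t
  · refine revOp_no fun v hv => ?_
    have := isU_fwd (x := x) (y := y) (u := v) T i r t
    rw [hv] at this
    rw [this] at hu
    cases hu

/-! ### output-shape lemmas for the machine operations -/

lemma Lop_out_M {i : Fin (k+1)} {r s : Bool} {mst : Fin (k+1)} {t : Bool}
    {x y v : BT k} {b' : Bool} {σ' : Fin (k+1)} {t' : Bool}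
    (h : BT.Lop i r s mst t x y v = BT.M b' σ' t') :
    σ' = mst ∧ t' = t ∧ x = BT.H ∧ y = BT.one := by
  cases v <;> simp only [BT.Lop] at h <;>
    first
    | (cases h)
    | (split_ifs at h <;> simp_all)

lemma Lop_out_C {i : Fin (k+1)} {r s : Bool} {mst : Fin (k+1)} {t : Bool}
    {x y v : BT k} {b' : Bool} {σ' : Fin (k+1)} {t' c : Bool}
    (h : BT.Lop i r s mst t x y v = BT.C b' σ' t' c) :
    σ' = mst ∧ t' = t ∧ x = BT.one ∧ y = BT.one := by
  cases v <;> simp only [BT.Lop] at h <;>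
    first
    | (cases h)
    | (split_ifs at h <;> simp_all)

lemma Lop_out_D {i : Fin (k+1)} {r s : Bool} {mst : Fin (k+1)} {t : Bool}
    {x y v : BT k} {b' : Bool} {σ' : Fin (k+1)} {t' c : Bool}
    (h : BT.Lop i r s mst t x y v = BT.D b' σ' t' c) :
    σ' = mst ∧ t' = t ∧ x = BT.two ∧ ((y = BT.H ∧ c = s) ∨ y = BT.two) := by
  cases v <;> simp only [BT.Lop] at h <;>
    first
    | (cases h)
    | (split_ifs at h <;> simp_all)

lemma Rop_out_M {i : Fin (k+1)} {r s : Bool} {mst : Fin (k+1)} {t : Bool}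
    {x y v : BT k} {b' : Bool} {σ' : Fin (k+1)} {t' : Bool}
    (h : BT.Rop i r s mst t x y v = BT.M b' σ' t') :
    σ' = mst ∧ t' = t ∧ x = BT.two ∧ y = BT.H := by
  cases v <;> simp only [BT.Rop] at h <;>
    first
    | (cases h)
    | (split_ifs at h <;> simp_all)

lemma Rop_out_C {i : Fin (k+1)} {r s : Bool} {mst : Fin (k+1)} {t : Bool}
    {x y v : BT k} {b' : Bool} {σ' : Fin (k+1)} {t' c : Bool}
    (h : BT.Rop i r s mst t x y v = BT.C b' σ' t' c) :
    σ' = mst ∧ t' = t ∧ y = BT.one ∧ ((x = BT.H ∧ c = s) ∨ x = BT.one) := by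
  cases v <;> simp only [BT.Rop] at h <;>
    first
    | (cases h)
    | (split_ifs at h <;> simp_all)

lemma Rop_out_D {i : Fin (k+1)} {r s : Bool} {mst : Fin (k+1)} {t : Bool}
    {x y v : BT k} {b' : Bool} {σ' : Fin (k+1)} {t' c : Bool}
    (h : BT.Rop i r s mst t x y v = BT.D b' σ' t' c) :
    σ' = mst ∧ t' = t ∧ x = BT.two ∧ y = BT.two := by
  cases v <;> simp only [BT.Rop] at h <;>
    first
    | (cases h)
    | (split_ifs at h <;> simp_all)

end Lemma41g
section Lemma41h
variable {k : ℕ} {T : TM k} {m : ℕ}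

/-- the classification predicate: zero somewhere on N, sequential, or configuration -/
def GoodF (T : TM k) (m : ℕ) (f : AA T m) : Prop :=
  (∃ x : {x : ℤ // x ∈ Nset T m}, f (some x) = BT.zero) ∨
    (∃ n ∈ Nset T m, f = aEl T m n) ∨
    (∃ (j : Fin 3) (Q : Cfg k), InCfgStar T m Q ∧ f = betaEl T m j Q)

lemma fwd_eq_L {i : Fin (k+1)} {r s t : Bool} {mst : Fin (k+1)}
    (hins : T.instr i r = (s, Dir.L, mst)) :
    fwd T i r t = BT.Lop i r s mst t := by
  unfold fwd; rw [hins]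

lemma fwd_eq_R {i : Fin (k+1)} {r s t : Bool} {mst : Fin (k+1)}
    (hins : T.instr i r = (s, Dir.R, mst)) :
    fwd T i r t = BT.Rop i r s mst t := by
  unfold fwd; rw [hins]

lemma mach_good (hm : ((cfgStep T)^[m] (Q0 k)).state = 0) (i : Fin (k+1)) (hi : i ≠ 0)
    (r t b : Bool) {p q : ℤ} (hp : p ∈ Nset T m) (hq : q ∈ Nset T m) (j : Fin 3)
    {Q : Cfg k} (hQ : InCfgStar T m Q) :
    GoodF T m (fun y => mop T i r t b (aEl T m p y) (aEl T m q y) (betaEl T m j Q y)) := by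
  have hπ : Q.pos ∈ Nset T m := by
    obtain ⟨nw, hnw, hposs⟩ := hQ
    simpa using hposs 0 (Nat.zero_le _)
  rcases hins : T.instr i r with ⟨s, d, mst⟩
  cases b
  · -- FORWARD operations
    cases d
    · -- Left instruction
      by_cases hσ : Q.state = i
      case neg =>
        refine Or.inl ⟨⟨Q.pos, hπ⟩, ?_⟩
        beta_reduce
        rw [mop_false_eq, betaEl_some_eq rfl]
        simp only [fwd, hins, BT.Lop]
        rw [if_neg (by rintro ⟨-, -, hc, -⟩; exact hσ hc)]
      by_cases hr : Q.tape Q.pos = r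
      case neg =>
        refine Or.inl ⟨⟨Q.pos, hπ⟩, ?_⟩
        beta_reduce
        rw [mop_false_eq, betaEl_some_eq rfl]
        simp only [fwd, hins, BT.Lop]
        rw [if_neg (by rintro ⟨-, -, -, hc⟩; exact hr hc)]
      by_cases hqπ : q = Q.pos
      case neg =>
        refine Or.inl ⟨⟨Q.pos, hπ⟩, ?_⟩
        beta_reduce
        rw [mop_false_eq, betaEl_some_eq rfl]
        rcases lt_trichotomy (Q.pos) q with h | h | h
        · rw [aEl_some_lt (n := q) h]
          simp only [fwd, hins, BT.Lop]
          rw [if_neg (by rintro ⟨-, hy, -⟩; cases hy)]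
        · exact absurd h.symm hqπ
        · rw [aEl_some_gt (n := q) h]
          simp only [fwd, hins, BT.Lop]
          rw [if_neg (by rintro ⟨-, hy, -⟩; cases hy)]
      subst hqπ
      by_cases hpπ : p = Q.pos - 1
      case neg =>
        rcases lt_or_ge p (Q.pos - 1) with hlt | hge
        · have hmem : p + 1 ∈ Nset T m := Nset_interval T m hp hπ (by omega) (by omega)
          refine Or.inl ⟨⟨p+1, hmem⟩, ?_⟩
          beta_reduce
          rw [mop_false_eq, betaEl_some_lt (show (p:ℤ) + 1 < Q.pos by omega),
            aEl_some_gt (n := p) (show (p:ℤ) < p + 1 by omega),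
            aEl_some_lt (n := Q.pos) (show (p:ℤ) + 1 < Q.pos by omega)]
          simp only [fwd, hins, BT.Lop]
          rw [if_neg (by rintro ⟨hx, -⟩; cases hx),
            if_neg (by rintro ⟨hx, -⟩; cases hx)]
        · refine Or.inl ⟨⟨Q.pos, hπ⟩, ?_⟩
          beta_reduce
          rw [mop_false_eq, betaEl_some_eq rfl]
          have hge' : Q.pos ≤ p := by omega
          rcases eq_or_lt_of_le hge' with he | hlt2
          · rw [aEl_some_eq (n := p) he]
            simp only [fwd, hins, BT.Lop]
            rw [if_neg (by rintro ⟨hx, -⟩; cases hx)]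
          · rw [aEl_some_lt (n := p) hlt2]
            simp only [fwd, hins, BT.Lop]
            rw [if_neg (by rintro ⟨hx, -⟩; cases hx)]
      subst hpπ
      by_cases ht' : Q.tape (Q.pos - 1) = t
      case neg =>
        refine Or.inl ⟨⟨Q.pos - 1, hp⟩, ?_⟩
        beta_reduce
        rw [mop_false_eq, betaEl_some_lt (show (Q.pos:ℤ) - 1 < Q.pos by omega),
          aEl_some_eq (n := Q.pos - 1) rfl,
          aEl_some_lt (n := Q.pos) (show (Q.pos:ℤ) - 1 < Q.pos by omega)]
        simp only [fwd, hins, BT.Lop]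
        rw [if_neg (by rintro ⟨hx, -⟩; cases hx),
          if_neg (by rintro ⟨-, -, -, -, hc⟩; exact ht' hc)]
      · refine Or.inr (Or.inr ⟨j, cfgStep T Q,
          star_step T m hm hQ (fun h0 => hi (hσ ▸ h0)), ?_⟩)
        have hsim := fwd_sim_L (T := T) (m := m) j (Q := Q)
          (fun h0 => hi (hσ ▸ h0)) (by rw [hσ, hr]; exact hins)
        simp only [mop_false_eq]
        rw [← hσ, ← hr, ← ht']
        exact hsim
    · -- Right instruction
      by_cases hσ : Q.state = i
      case neg =>
        refine Or.inl ⟨⟨Q.pos, hπ⟩, ?_⟩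
        beta_reduce
        rw [mop_false_eq, betaEl_some_eq rfl]
        simp only [fwd, hins, BT.Rop]
        rw [if_neg (by rintro ⟨-, -, hc, -⟩; exact hσ hc)]
      by_cases hr : Q.tape Q.pos = r
      case neg =>
        refine Or.inl ⟨⟨Q.pos, hπ⟩, ?_⟩
        beta_reduce
        rw [mop_false_eq, betaEl_some_eq rfl]
        simp only [fwd, hins, BT.Rop]
        rw [if_neg (by rintro ⟨-, -, -, hc⟩; exact hr hc)]
      by_cases hpπ : p = Q.pos
      case neg =>
        refine Or.inl ⟨⟨Q.pos, hπ⟩, ?_⟩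
        beta_reduce
        rw [mop_false_eq, betaEl_some_eq rfl]
        rcases lt_trichotomy (Q.pos) p with h | h | h
        · rw [aEl_some_lt (n := p) h]
          simp only [fwd, hins, BT.Rop]
          rw [if_neg (by rintro ⟨hx, -⟩; cases hx)]
        · exact absurd h.symm hpπ
        · rw [aEl_some_gt (n := p) h]
          simp only [fwd, hins, BT.Rop]
          rw [if_neg (by rintro ⟨hx, -⟩; cases hx)]
      subst hpπ
      by_cases hπq : Q.pos < q
      case neg =>
        refine Or.inl ⟨⟨Q.pos, hπ⟩, ?_⟩
        beta_reduce
        rw [mop_false_eq, betaEl_some_eq rfl]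
        rcases eq_or_lt_of_le (show q ≤ Q.pos by omega) with he | hlt
        · rw [aEl_some_eq (n := q) he.symm]
          simp only [fwd, hins, BT.Rop]
          rw [if_neg (by rintro ⟨-, hy, -⟩; cases hy)]
        · rw [aEl_some_gt (n := q) hlt]
          simp only [fwd, hins, BT.Rop]
          rw [if_neg (by rintro ⟨-, hy, -⟩; cases hy)]
      by_cases hq1 : q = Q.pos + 1
      case neg =>
        have hmem : Q.pos + 1 ∈ Nset T m := Nset_interval T m hπ hq (by omega) (by omega)
        refine Or.inl ⟨⟨Q.pos + 1, hmem⟩, ?_⟩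
        beta_reduce
        rw [mop_false_eq, betaEl_some_gt (show (Q.pos:ℤ) < Q.pos + 1 by omega),
          aEl_some_gt (n := Q.pos) (show (Q.pos:ℤ) < Q.pos + 1 by omega),
          aEl_some_lt (n := q) (show (Q.pos:ℤ) + 1 < q by omega)]
        simp only [fwd, hins, BT.Rop]
        rw [if_neg (by rintro ⟨-, hy, -⟩; cases hy),
          if_neg (by rintro ⟨-, hy, -⟩; cases hy)]
      subst hq1
      by_cases hts : Q.tape (Q.pos + 1) = t
      case neg =>
        refine Or.inl ⟨⟨Q.pos + 1, hq⟩, ?_⟩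
        beta_reduce
        rw [mop_false_eq, betaEl_some_gt (show (Q.pos:ℤ) < Q.pos + 1 by omega),
          aEl_some_gt (n := Q.pos) (show (Q.pos:ℤ) < Q.pos + 1 by omega),
          aEl_some_eq (n := Q.pos + 1) rfl]
        simp only [fwd, hins, BT.Rop]
        rw [if_neg (by rintro ⟨-, -, -, -, hc⟩; exact hts hc),
          if_neg (by rintro ⟨-, hy, -⟩; cases hy)]
      · refine Or.inr (Or.inr ⟨j, cfgStep T Q,
          star_step T m hm hQ (fun h0 => hi (hσ ▸ h0)), ?_⟩)
        have hsim := fwd_sim_R (T := T) (m := m) j (Q := Q)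
          (fun h0 => hi (hσ ▸ h0)) (by rw [hσ, hr]; exact hins)
        simp only [mop_false_eq]
        rw [← hσ, ← hr, ← hts]
        exact hsim
  · -- REVERSE operations
    cases d
    · -- Left instruction
      by_cases hσ : Q.state = mst
      case neg =>
        refine Or.inl ⟨⟨Q.pos, hπ⟩, ?_⟩
        beta_reduce
        rw [mop_true_eq, betaEl_some_eq rfl]
        refine revOp_no fun v hv => ?_
        rw [fwd_eq_L hins] at hv
        exact hσ (Lop_out_M hv).1
      by_cases hrt : Q.tape Q.pos = t
      case neg =>
        refine Or.inl ⟨⟨Q.pos, hπ⟩, ?_⟩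
        beta_reduce
        rw [mop_true_eq, betaEl_some_eq rfl]
        refine revOp_no fun v hv => ?_
        rw [fwd_eq_L hins] at hv
        exact hrt (Lop_out_M hv).2.1
      by_cases hpπ : p = Q.pos
      case neg =>
        refine Or.inl ⟨⟨Q.pos, hπ⟩, ?_⟩
        beta_reduce
        rw [mop_true_eq, betaEl_some_eq rfl]
        rcases lt_trichotomy (Q.pos) p with h | h | h
        · rw [aEl_some_lt (n := p) h]
          refine revOp_no fun v hv => ?_
          rw [fwd_eq_L hins] at hv
          cases (Lop_out_M hv).2.2.1
        · exact absurd h.symm hpπ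
        · rw [aEl_some_gt (n := p) h]
          refine revOp_no fun v hv => ?_
          rw [fwd_eq_L hins] at hv
          cases (Lop_out_M hv).2.2.1
      subst hpπ
      by_cases hπq : Q.pos < q
      case neg =>
        refine Or.inl ⟨⟨Q.pos, hπ⟩, ?_⟩
        beta_reduce
        rw [mop_true_eq, betaEl_some_eq rfl]
        rcases eq_or_lt_of_le (show q ≤ Q.pos by omega) with he | hlt
        · rw [aEl_some_eq (n := q) he.symm]
          refine revOp_no fun v hv => ?_
          rw [fwd_eq_L hins] at hv
          cases (Lop_out_M hv).2.2.2
        · rw [aEl_some_gt (n := q) hlt]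
          refine revOp_no fun v hv => ?_
          rw [fwd_eq_L hins] at hv
          cases (Lop_out_M hv).2.2.2
      by_cases hq1 : q = Q.pos + 1
      case neg =>
        have hmem : Q.pos + 1 ∈ Nset T m := Nset_interval T m hπ hq (by omega) (by omega)
        refine Or.inl ⟨⟨Q.pos + 1, hmem⟩, ?_⟩
        beta_reduce
        rw [mop_true_eq, betaEl_some_gt (show (Q.pos:ℤ) < Q.pos + 1 by omega),
          aEl_some_gt (n := Q.pos) (show (Q.pos:ℤ) < Q.pos + 1 by omega),
          aEl_some_lt (n := q) (show (Q.pos:ℤ) + 1 < q by omega)]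
        refine revOp_no fun v hv => ?_
        rw [fwd_eq_L hins] at hv
        rcases (Lop_out_D hv).2.2.2 with ⟨hy, -⟩ | hy <;> cases hy
      subst hq1
      by_cases hts : Q.tape (Q.pos + 1) = s
      case neg =>
        refine Or.inl ⟨⟨Q.pos + 1, hq⟩, ?_⟩
        beta_reduce
        rw [mop_true_eq, betaEl_some_gt (show (Q.pos:ℤ) < Q.pos + 1 by omega),
          aEl_some_gt (n := Q.pos) (show (Q.pos:ℤ) < Q.pos + 1 by omega),
          aEl_some_eq (n := Q.pos + 1) rfl]
        refine revOp_no fun v hv => ?_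
        rw [fwd_eq_L hins] at hv
        rcases (Lop_out_D hv).2.2.2 with ⟨-, hc⟩ | hy
        · exact hts hc
        · cases hy
      · -- success (reverse of a Left instruction)
        have hstep : cfgStep T (⟨Function.update Q.tape (Q.pos + 1) r,
            Q.pos + 1, i⟩ : Cfg k) = Q := by
          have h1 := cfgStep_L (T := T)
            (Q := (⟨Function.update Q.tape (Q.pos + 1) r, Q.pos + 1, i⟩ : Cfg k))
            hi (by show T.instr i (Function.update Q.tape (Q.pos+1) r (Q.pos+1)) = _
                   rw [Function.update_self]; exact hins)
          rw [h1]
          show (⟨Function.update (Function.update Q.tape (Q.pos+1) r) (Q.pos+1) s,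
            Q.pos + 1 - 1, mst⟩ : Cfg k) = Q
          rw [Function.update_idem, ← hts, Function.update_eq_self,
            show Q.pos + 1 - 1 = Q.pos by ring, ← hσ]
        refine Or.inr (Or.inr ⟨j, ⟨Function.update Q.tape (Q.pos + 1) r, Q.pos + 1, i⟩,
          star_pred T m hQ hstep hq, ?_⟩)
        simp only [mop_true_eq]
        exact rev_sim_L j hins hσ hrt hts
    · -- Right instruction
      by_cases hσ : Q.state = mst
      case neg =>
        refine Or.inl ⟨⟨Q.pos, hπ⟩, ?_⟩
        beta_reduce
        rw [mop_true_eq, betaEl_some_eq rfl]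
        refine revOp_no fun v hv => ?_
        rw [fwd_eq_R hins] at hv
        exact hσ (Rop_out_M hv).1
      by_cases hrt : Q.tape Q.pos = t
      case neg =>
        refine Or.inl ⟨⟨Q.pos, hπ⟩, ?_⟩
        beta_reduce
        rw [mop_true_eq, betaEl_some_eq rfl]
        refine revOp_no fun v hv => ?_
        rw [fwd_eq_R hins] at hv
        exact hrt (Rop_out_M hv).2.1
      by_cases hqπ : q = Q.pos
      case neg =>
        refine Or.inl ⟨⟨Q.pos, hπ⟩, ?_⟩
        beta_reduce
        rw [mop_true_eq, betaEl_some_eq rfl]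
        rcases lt_trichotomy (Q.pos) q with h | h | h
        · rw [aEl_some_lt (n := q) h]
          refine revOp_no fun v hv => ?_
          rw [fwd_eq_R hins] at hv
          cases (Rop_out_M hv).2.2.2
        · exact absurd h.symm hqπ
        · rw [aEl_some_gt (n := q) h]
          refine revOp_no fun v hv => ?_
          rw [fwd_eq_R hins] at hv
          cases (Rop_out_M hv).2.2.2
      subst hqπ
      by_cases hπp : p < Q.pos
      case neg =>
        refine Or.inl ⟨⟨Q.pos, hπ⟩, ?_⟩
        beta_reduce
        rw [mop_true_eq, betaEl_some_eq rfl]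
        rcases eq_or_lt_of_le (show Q.pos ≤ p by omega) with he | hlt
        · rw [aEl_some_eq (n := p) he]
          refine revOp_no fun v hv => ?_
          rw [fwd_eq_R hins] at hv
          cases (Rop_out_M hv).2.2.1
        · rw [aEl_some_lt (n := p) hlt]
          refine revOp_no fun v hv => ?_
          rw [fwd_eq_R hins] at hv
          cases (Rop_out_M hv).2.2.1
      by_cases hp1 : p = Q.pos - 1
      case neg =>
        have hmem : Q.pos - 1 ∈ Nset T m := Nset_interval T m hp hπ (by omega) (by omega)
        refine Or.inl ⟨⟨Q.pos - 1, hmem⟩, ?_⟩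
        beta_reduce
        rw [mop_true_eq, betaEl_some_lt (show (Q.pos:ℤ) - 1 < Q.pos by omega),
          aEl_some_gt (n := p) (show (p:ℤ) < Q.pos - 1 by omega),
          aEl_some_lt (n := Q.pos) (show (Q.pos:ℤ) - 1 < Q.pos by omega)]
        refine revOp_no fun v hv => ?_
        rw [fwd_eq_R hins] at hv
        rcases (Rop_out_C hv).2.2.2 with ⟨hx, -⟩ | hx <;> cases hx
      subst hp1
      by_cases hts : Q.tape (Q.pos - 1) = s
      case neg =>
        refine Or.inl ⟨⟨Q.pos - 1, hp⟩, ?_⟩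
        beta_reduce
        rw [mop_true_eq, betaEl_some_lt (show (Q.pos:ℤ) - 1 < Q.pos by omega),
          aEl_some_eq (n := Q.pos - 1) rfl,
          aEl_some_lt (n := Q.pos) (show (Q.pos:ℤ) - 1 < Q.pos by omega)]
        refine revOp_no fun v hv => ?_
        rw [fwd_eq_R hins] at hv
        rcases (Rop_out_C hv).2.2.2 with ⟨-, hc⟩ | hx
        · exact hts hc
        · cases hx
      · -- success (reverse of a Right instruction)
        have hstep : cfgStep T (⟨Function.update Q.tape (Q.pos - 1) r,
            Q.pos - 1, i⟩ : Cfg k) = Q := by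
          have h1 := cfgStep_R (T := T)
            (Q := (⟨Function.update Q.tape (Q.pos - 1) r, Q.pos - 1, i⟩ : Cfg k))
            hi (by show T.instr i (Function.update Q.tape (Q.pos-1) r (Q.pos-1)) = _
                   rw [Function.update_self]; exact hins)
          rw [h1]
          show (⟨Function.update (Function.update Q.tape (Q.pos-1) r) (Q.pos-1) s,
            Q.pos - 1 + 1, mst⟩ : Cfg k) = Q
          rw [Function.update_idem, ← hts, Function.update_eq_self,
            show Q.pos - 1 + 1 = Q.pos by ring, ← hσ]
        refine Or.inr (Or.inr ⟨j, ⟨Function.update Q.tape (Q.pos - 1) r, Q.pos - 1, i⟩,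
          star_pred T m hQ hstep hp, ?_⟩)
        simp only [mop_true_eq]
        exact rev_sim_R j hins hσ hrt hts

end Lemma41h
section Lemma41i
variable {k : ℕ} {T : TM k} {m : ℕ}

namespace BT

lemma meetI_off {j : Fin 3} {x y : BT k}
    (h : ¬(x = y ∧ (x.isP = true ∨ x.isV10 = true) ∧ x ≠ sel j)) :
    meetI j x y = zero := by
  unfold meetI
  rw [if_neg (by simpa using h)]

lemma meetI_pos {j : Fin 3} {x y : BT k}
    (h : x = y ∧ (x.isP = true ∨ x.isV10 = true) ∧ x ≠ sel j) :
    meetI j x y = x := by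
  unfold meetI
  rw [if_pos (by simpa using h)]

lemma J'_zero_mid {x z : BT k} (hx : x ≠ zero) : J' x zero z = zero := by
  unfold J'
  split_ifs with h1 h2
  · rcases h1 with h' | ⟨-, h'⟩
    · exact absurd h' hx
    · simp [isP] at h'
  · simp [isVV] at h2
  · rfl

lemma J'_zero_right {x y : BT k} (h2 : ¬(y.isVV = true ∧ x = barOp y)) :
    J' x y zero = zero := by
  unfold J'
  by_cases c1 : x = y ∨ (x.isP = true ∧ y.isP = true)
  · rw [if_pos (by simpa using c1)]
    exact meet_zero_right
  · rw [if_neg (by simpa using c1), if_neg (by simpa using h2)]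

end BT

lemma aEl_ne_betaEl {n : ℤ} {j : Fin 3} {Q : Cfg k} {x : {x : ℤ // x ∈ Nset T m}} :
    aEl T m n (some x) ≠ betaEl T m j Q (some x) := by
  intro he
  have h1 := aEl_isU (T := T) (m := m) (n := n) (x := x)
  rw [he, betaEl_isU] at h1
  cases h1

lemma betaEl_ne_aEl {n : ℤ} {j : Fin 3} {Q : Cfg k} {x : {x : ℤ // x ∈ Nset T m}} :
    betaEl T m j Q (some x) ≠ aEl T m n (some x) :=
  fun he => aEl_ne_betaEl he.symm

/-! ### closure under T0 -/

lemma good_T0 {f : AA T m} (hf : GoodF T m f) : GoodF T m (fun y => BT.T0 (f y)) := by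
  rcases hf with ⟨x, hx⟩ | ⟨n, hn, rfl⟩ | ⟨j, Q, hQ, rfl⟩
  · exact Or.inl ⟨x, by beta_reduce; rw [hx]; rfl⟩
  · refine Or.inl ⟨⟨0, zero_mem_Nset T m⟩, ?_⟩
    beta_reduce
    rcases lt_trichotomy ((0:ℤ)) n with h | h | h
    · rw [aEl_some_lt (n := n) h]; rfl
    · rw [aEl_some_eq (n := n) h]; rfl
    · rw [aEl_some_gt (n := n) h]; rfl
  · by_cases hst : Q.state = 0
    · refine Or.inr (Or.inr ⟨if j = 1 then 0 else 2, Q, hQ, ?_⟩)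
      funext y
      rcases y with _ | x
      · show BT.T0 (BT.P j) = BT.P (if j = 1 then 0 else 2)
        by_cases hj : j = 1 <;> simp [BT.T0, hj]
      · beta_reduce
        rcases lt_trichotomy (x.1) Q.pos with h | h | h
        · rw [betaEl_some_lt (j := j) h, betaEl_some_lt (j := if j = 1 then 0 else 2) h]
          simp [BT.T0, hst]
        · rw [betaEl_some_eq (j := j) h, betaEl_some_eq (j := if j = 1 then 0 else 2) h]
          simp [BT.T0, hst]
        · rw [betaEl_some_gt (j := j) h, betaEl_some_gt (j := if j = 1 then 0 else 2) h]
          simp [BT.T0, hst]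
    · refine Or.inl ⟨⟨0, zero_mem_Nset T m⟩, ?_⟩
      beta_reduce
      rcases lt_trichotomy ((0:ℤ)) Q.pos with h | h | h
      · rw [betaEl_some_lt (show ((0:ℤ)) < Q.pos from h)]; simp [BT.T0, hst]
      · rw [betaEl_some_eq (show ((0:ℤ)) = Q.pos from h)]; simp [BT.T0, hst]
      · rw [betaEl_some_gt (show Q.pos < ((0:ℤ)) from h)]; simp [BT.T0, hst]

/-! ### closure under meet -/

lemma good_meet {f g : AA T m} (hf : GoodF T m f) (hg : GoodF T m g) :
    GoodF T m (fun y => BT.meet (f y) (g y)) := by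
  rcases hf with ⟨x, hx⟩ | ⟨n, hn, rfl⟩ | ⟨j1, Q, hQ, rfl⟩
  · exact Or.inl ⟨x, by beta_reduce; rw [hx, BT.meet_zero_left]⟩
  · rcases hg with ⟨x, hx⟩ | ⟨p, hp', rfl⟩ | ⟨j2, Q', hQ', rfl⟩
    · exact Or.inl ⟨x, by beta_reduce; rw [hx, BT.meet_zero_right]⟩
    · by_cases hnp : n = p
      · subst hnp
        exact Or.inr (Or.inl ⟨n, hn, funext fun y => BT.meet_self⟩)
      · refine Or.inl ⟨⟨n, hn⟩, ?_⟩
        beta_reduce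
        rw [aEl_some_eq (n := n) rfl]
        rcases lt_trichotomy (n) p with h | h | h
        · rw [aEl_some_lt (n := p) h]; exact BT.meet_ne (by simp) rfl
        · exact absurd h hnp
        · rw [aEl_some_gt (n := p) h]; exact BT.meet_ne (by simp) rfl
    · exact Or.inl ⟨⟨0, zero_mem_Nset T m⟩,
        by beta_reduce; exact BT.meet_ne aEl_ne_betaEl aEl_isP⟩
  · rcases hg with ⟨x, hx⟩ | ⟨p, hp', rfl⟩ | ⟨j2, Q', hQ', rfl⟩
    · exact Or.inl ⟨x, by beta_reduce; rw [hx, BT.meet_zero_right]⟩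
    · exact Or.inl ⟨⟨0, zero_mem_Nset T m⟩,
        by beta_reduce; exact BT.meet_ne betaEl_ne_aEl betaEl_isP⟩
    · by_cases hall : ∀ x : {x : ℤ // x ∈ Nset T m},
        betaEl T m j1 Q (some x) = betaEl T m j2 Q' (some x)
      · refine Or.inr (Or.inr ⟨if j1 = j2 then j1 else 2, Q, hQ, ?_⟩)
        funext y
        rcases y with _ | x
        · show BT.meet (BT.P j1) (BT.P j2) = BT.P (if j1 = j2 then j1 else 2)
          exact BT.meet_P
        · beta_reduce
          rw [← hall x, BT.meet_self]
          exact betaEl_j_irrel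
      · push_neg at hall
        obtain ⟨x, hne⟩ := hall
        exact Or.inl ⟨x, by beta_reduce; exact BT.meet_ne hne betaEl_isP⟩

/-! ### closure under T1 -/

lemma good_T1 {f g : AA T m} (hf : GoodF T m f) (hg : GoodF T m g) :
    GoodF T m (fun y => BT.T1 (f y) (g y)) := by
  rcases hf with ⟨x, hx⟩ | ⟨n, hn, rfl⟩ | ⟨j1, Q, hQ, rfl⟩
  · exact Or.inl ⟨x, by beta_reduce; rw [hx]; exact BT.T1_eq_zero rfl (Or.inr rfl)⟩
  · exact Or.inl ⟨⟨0, zero_mem_Nset T m⟩,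
      by beta_reduce; exact BT.T1_eq_zero aEl_isP (Or.inr aEl_isV10)⟩
  · rcases hg with ⟨x, hx⟩ | ⟨p, hp', rfl⟩ | ⟨j2, Q', hQ', rfl⟩
    · refine Or.inl ⟨x, ?_⟩
      beta_reduce
      rw [hx]
      exact BT.T1_eq_zero betaEl_isP (Or.inl betaEl_ne_zero)
    · exact Or.inl ⟨⟨0, zero_mem_Nset T m⟩,
        by beta_reduce; exact BT.T1_eq_zero betaEl_isP (Or.inl betaEl_ne_aEl)⟩
    · by_cases hall : ∀ x : {x : ℤ // x ∈ Nset T m},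
        betaEl T m j1 Q (some x) = betaEl T m j2 Q' (some x)
      · by_cases hv : ∀ x : {x : ℤ // x ∈ Nset T m},
          (betaEl T m j1 Q (some x)).isV10 = true
        · refine Or.inr (Or.inr ⟨if j1 = 0 ∨ j2 = 0 then 1 else 2, Q, hQ, ?_⟩)
          funext y
          rcases y with _ | x
          · show BT.T1 (BT.P j1) (BT.P j2) = BT.P (if j1 = 0 ∨ j2 = 0 then 1 else 2)
            exact BT.T1_P
          · beta_reduce
            rw [← hall x, BT.T1_self_V10 (hv x)]
            exact betaEl_j_irrel
        · push_neg at hv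
          obtain ⟨x, hx⟩ := hv
          simp only [ne_eq, Bool.not_eq_true] at hx
          exact Or.inl ⟨x, by beta_reduce; exact BT.T1_eq_zero betaEl_isP (Or.inr hx)⟩
      · push_neg at hall
        obtain ⟨x, hne⟩ := hall
        exact Or.inl ⟨x, by beta_reduce; exact BT.T1_eq_zero betaEl_isP (Or.inl hne)⟩

/-! ### closure under meetI -/

lemma good_meetI (hm : ((cfgStep T)^[m] (Q0 k)).state = 0) (j : Fin 3) {f g : AA T m}
    (hf : GoodF T m f) (hg : GoodF T m g) :
    GoodF T m (fun y => BT.meetI j (f y) (g y)) := by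
  rcases hf with ⟨x, hx⟩ | ⟨n, hn, rfl⟩ | ⟨j1, Q, hQ, rfl⟩
  · refine Or.inl ⟨x, ?_⟩
    beta_reduce
    rw [hx]
    exact BT.meetI_off (by rintro ⟨-, h | h, -⟩ <;> cases h)
  · exact Or.inl ⟨⟨0, zero_mem_Nset T m⟩, by
      beta_reduce
      exact BT.meetI_off (by
        rintro ⟨-, h | h, -⟩
        · rw [aEl_isP] at h; cases h
        · rw [aEl_isV10] at h; cases h)⟩
  · rcases hg with ⟨x, hx⟩ | ⟨p, hp', rfl⟩ | ⟨j2, Q', hQ', rfl⟩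
    · refine Or.inl ⟨x, ?_⟩
      beta_reduce
      rw [hx]
      exact BT.meetI_off (by rintro ⟨he, -⟩; exact betaEl_ne_zero he)
    · exact Or.inl ⟨⟨0, zero_mem_Nset T m⟩, by
        beta_reduce
        exact BT.meetI_off (by rintro ⟨he, -⟩; exact betaEl_ne_aEl he)⟩
    · -- both configurations: either some coordinate dies, or impossible by translation
      have hπ : Q.pos ∈ Nset T m := by
        obtain ⟨nw, hnw, hposs⟩ := hQ
        simpa using hposs 0 (Nat.zero_le _)
      by_cases hgood : ∀ x : {x : ℤ // x ∈ Nset T m},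
        (betaEl T m j1 Q (some x)).isV10 = true ∧ betaEl T m j1 Q (some x) ≠ BT.sel j
      · exfalso
        have hM := hgood ⟨Q.pos, hπ⟩
        rw [betaEl_some_eq rfl] at hM
        have hstate : Q.state = 1 ∧ Q.tape Q.pos = false := by
          rcases BT.isV10_iff.1 hM.1 with h | h | h
          · cases h
          · obtain ⟨-, h1, h2⟩ := BT.M.inj h
            exact ⟨h1, h2⟩
          · cases h
        have htape : ∀ w ∈ Nset T m, Q.tape w = false := by
          intro w hw
          rcases lt_trichotomy w Q.pos with h | h | h
          · have hv := (hgood ⟨w, hw⟩).1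
            rw [betaEl_some_lt (show ((⟨w, hw⟩ : {x : ℤ // x ∈ Nset T m}) : ℤ) < Q.pos from h)] at hv
            rcases BT.isV10_iff.1 hv with h' | h' | h'
            · obtain ⟨-, -, -, h4⟩ := BT.C.inj h'
              exact h4
            · cases h'
            · cases h'
          · rw [h]; exact hstate.2
          · have hv := (hgood ⟨w, hw⟩).1
            rw [betaEl_some_gt (show Q.pos < ((⟨w, hw⟩ : {x : ℤ // x ∈ Nset T m}) : ℤ) from h)] at hv
            rcases BT.isV10_iff.1 hv with h' | h' | h'
            · cases h'
            · cases h'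
            · obtain ⟨-, -, -, h4⟩ := BT.D.inj h'
              exact h4
        fin_cases j
        · -- j = 0 : no C coordinate, so Q.pos ≤ -1
          have hnolt : ∀ w : {x : ℤ // x ∈ Nset T m}, ¬ ((w : ℤ) < Q.pos) := by
            intro w hlt
            have h2 := (hgood w).2
            rw [betaEl_some_lt hlt, hstate.1, hstate.2, htape w.1 w.2] at h2
            exact h2 (by simp [BT.sel])
          have h1' : ¬((-1:ℤ) < Q.pos) := hnolt ⟨-1, neg_one_mem_Nset T m⟩
          exact no_translate T m hm hQ hstate.1 htape (by omega)
        · -- j = 1 : the head coordinate is sel 1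
          have h2 := hM.2
          rw [hstate.1, hstate.2] at h2
          exact h2 (by simp [BT.sel])
        · -- j = 2 : no D coordinate, so 1 ≤ Q.pos
          have hnogt : ∀ w : {x : ℤ // x ∈ Nset T m}, ¬ (Q.pos < (w : ℤ)) := by
            intro w hlt
            have h2 := (hgood w).2
            rw [betaEl_some_gt hlt, hstate.1, hstate.2, htape w.1 w.2] at h2
            exact h2 (by simp [BT.sel])
          have h1' : ¬(Q.pos < (1:ℤ)) := hnogt ⟨1, one_mem_Nset T m⟩
          exact no_translate T m hm hQ hstate.1 htape (by omega)
      · push_neg at hgood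
        obtain ⟨x, hx⟩ := hgood
        refine Or.inl ⟨x, ?_⟩
        beta_reduce
        refine BT.meetI_off ?_
        rintro ⟨-, hPV, hsel⟩
        rcases hPV with hP | hV
        · rw [betaEl_isP] at hP; cases hP
        · exact hsel (hx hV)

/-! ### closure under J' -/

lemma good_J' {f g h : AA T m} (hf : GoodF T m f) (hg : GoodF T m g)
    (hh : GoodF T m h) : GoodF T m (fun y => BT.J' (f y) (g y) (h y)) := by
  rcases hf with ⟨x, hx⟩ | ⟨n, hn, rfl⟩ | ⟨j1, Q, hQ, rfl⟩
  · exact Or.inl ⟨x, by beta_reduce; rw [hx]; exact BT.J'_zero_left⟩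
  · rcases hg with ⟨x, hx⟩ | ⟨p, hp', rfl⟩ | ⟨j2, Q', hQ', rfl⟩
    · exact Or.inl ⟨x, by beta_reduce; rw [hx]; exact BT.J'_zero_mid aEl_ne_zero⟩
    · by_cases hnp : n = p
      · subst hnp
        have heq : (fun y => BT.J' (aEl T m n y) (aEl T m n y) (h y))
            = fun y => BT.meet (aEl T m n y) (h y) :=
          funext fun y => BT.J'_cond1 (Or.inl rfl)
        rw [heq]
        exact good_meet (Or.inr (Or.inl ⟨n, hn, rfl⟩)) hh
      · refine Or.inl ⟨⟨n, hn⟩, ?_⟩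
        beta_reduce
        rw [aEl_some_eq (n := n) rfl]
        refine BT.J'_off ?_ ?_
        · rintro (he | ⟨hP, -⟩)
          · rcases lt_trichotomy (n) p with h' | h' | h'
            · rw [aEl_some_lt (n := p) h'] at he; cases he
            · exact absurd h' hnp
            · rw [aEl_some_gt (n := p) h'] at he; cases he
          · cases hP
        · rintro ⟨hvv, -⟩
          rw [aEl_isVV] at hvv; cases hvv
    · refine Or.inl ⟨⟨0, zero_mem_Nset T m⟩, ?_⟩
      beta_reduce
      refine BT.J'_off ?_ ?_
      · rintro (he | ⟨hP, -⟩)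
        · exact aEl_ne_betaEl he
        · rw [aEl_isP] at hP; cases hP
      · rintro ⟨hvv, he⟩
        exact BT.ne_barOp hvv betaEl_isBar aEl_isBar he
  · rcases hg with ⟨x, hx⟩ | ⟨p, hp', rfl⟩ | ⟨j2, Q', hQ', rfl⟩
    · exact Or.inl ⟨x, by beta_reduce; rw [hx]; exact BT.J'_zero_mid betaEl_ne_zero⟩
    · refine Or.inl ⟨⟨0, zero_mem_Nset T m⟩, ?_⟩
      beta_reduce
      refine BT.J'_off ?_ ?_
      · rintro (he | ⟨hP, -⟩)
        · exact betaEl_ne_aEl he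
        · rw [betaEl_isP] at hP; cases hP
      · rintro ⟨hvv, -⟩
        rw [aEl_isVV] at hvv; cases hvv
    · by_cases hall : ∀ x : {x : ℤ // x ∈ Nset T m},
        betaEl T m j1 Q (some x) = betaEl T m j2 Q' (some x)
      · have heq : (fun y => BT.J' (betaEl T m j1 Q y) (betaEl T m j2 Q' y) (h y))
            = fun y => BT.meet (betaEl T m j1 Q y) (h y) := by
          funext y
          rcases y with _ | x
          · exact BT.J'_cond1 (Or.inr ⟨rfl, rfl⟩)
          · exact BT.J'_cond1 (Or.inl (hall x))
        rw [heq]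
        exact good_meet (Or.inr (Or.inr ⟨j1, Q, hQ, rfl⟩)) hh
      · push_neg at hall
        obtain ⟨x, hne⟩ := hall
        refine Or.inl ⟨x, ?_⟩
        beta_reduce
        refine BT.J'_off ?_ ?_
        · rintro (he | ⟨hP, -⟩)
          · exact hne he
          · rw [betaEl_isP] at hP; cases hP
        · rintro ⟨hvv, he⟩
          exact BT.ne_barOp hvv betaEl_isBar betaEl_isBar he

/-! ### closure under S1, S2 -/

lemma good_S1 {f g h p : AA T m} (hf : GoodF T m f)
    (hgP : ∀ x : {x : ℤ // x ∈ Nset T m}, (g (some x)).isP = false) :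
    GoodF T m (fun y => BT.S1 (f y) (g y) (h y) (p y)) := by
  rcases hf with ⟨x, hx⟩ | ⟨n, hn, rfl⟩ | ⟨j, Q, hQ, rfl⟩
  · refine Or.inl ⟨x, ?_⟩
    beta_reduce
    rw [hx]
    exact BT.S1_off (by rintro (he | he) <;> cases he) (hgP x)
  · refine Or.inl ⟨⟨n, hn⟩, ?_⟩
    beta_reduce
    rw [aEl_some_eq (n := n) rfl]
    exact BT.S1_off (by rintro (he | he) <;> cases he) (hgP _)
  · refine Or.inl ⟨⟨0, zero_mem_Nset T m⟩, ?_⟩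
    beta_reduce
    rcases lt_trichotomy ((0:ℤ)) Q.pos with h' | h' | h'
    · rw [betaEl_some_lt (show ((0:ℤ)) < Q.pos from h')]
      exact BT.S1_off (by rintro (he | he) <;> cases he) (hgP _)
    · rw [betaEl_some_eq (show ((0:ℤ)) = Q.pos from h')]
      exact BT.S1_off (by rintro (he | he) <;> cases he) (hgP _)
    · rw [betaEl_some_gt (show Q.pos < ((0:ℤ)) from h')]
      exact BT.S1_off (by rintro (he | he) <;> cases he) (hgP _)

lemma good_S2 {f g h p q : AA T m} (hf : GoodF T m f) (hg : GoodF T m g)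
    (hhP : ∀ x : {x : ℤ // x ∈ Nset T m}, (h (some x)).isP = false) :
    GoodF T m (fun y => BT.S2 (f y) (g y) (h y) (p y) (q y)) := by
  rcases hg with ⟨x, hx⟩ | ⟨n, hn, rfl⟩ | ⟨j, Q, hQ, rfl⟩
  · refine Or.inl ⟨x, ?_⟩
    beta_reduce
    rw [hx]
    exact BT.S2_off (by rintro ⟨hvv, -⟩; cases hvv) (hhP x)
  · refine Or.inl ⟨⟨0, zero_mem_Nset T m⟩, ?_⟩
    beta_reduce
    exact BT.S2_off (by rintro ⟨hvv, -⟩; rw [aEl_isVV] at hvv; cases hvv) (hhP _)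
  · rcases hf with ⟨x, hx⟩ | ⟨n, hn, rfl⟩ | ⟨j', Q', hQ', rfl⟩
    · refine Or.inl ⟨x, ?_⟩
      beta_reduce
      rw [hx]
      refine BT.S2_off ?_ (hhP x)
      rintro ⟨hvv, he⟩
      exact BT.barOp_ne_zero hvv he.symm
    · refine Or.inl ⟨⟨0, zero_mem_Nset T m⟩, ?_⟩
      beta_reduce
      refine BT.S2_off ?_ (hhP _)
      rintro ⟨hvv, he⟩
      exact BT.ne_barOp hvv betaEl_isBar aEl_isBar he
    · refine Or.inl ⟨⟨0, zero_mem_Nset T m⟩, ?_⟩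
      beta_reduce
      refine BT.S2_off ?_ (hhP _)
      rintro ⟨hvv, he⟩
      exact BT.ne_barOp hvv betaEl_isBar betaEl_isBar he

end Lemma41i
section Lemma41j
variable {k : ℕ} {T : TM k} {m : ℕ}

lemma U1_off {F : BT k → BT k → BT k → BT k} {x y z u : BT k}
    (h1 : ¬(prec x y = true ∧ prec x z = true ∧ y ≠ z ∧ (F x y u).isVV = true))
    (h2 : ¬(prec x y = true ∧ y = z)) : U1op F x y z u = BT.zero := by
  unfold U1op
  rw [if_neg (by simpa using h1), if_neg (by simpa using h2)]

lemma U1_same {F : BT k → BT k → BT k → BT k} {x y z u : BT k}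
    (hyz : y = z) (hp : prec x y = true) : U1op F x y z u = F x y u := by
  unfold U1op
  rw [if_neg (by rintro ⟨-, -, hne, -⟩; exact hne hyz), if_pos (by exact ⟨hp, hyz⟩)]

lemma U1_zero_out {F : BT k → BT k → BT k → BT k} {x y z u : BT k}
    (hF : F x y u = BT.zero) : U1op F x y z u = BT.zero := by
  unfold U1op
  rw [hF, if_neg (by rintro ⟨-, -, -, hvv⟩; simp [BT.isVV] at hvv)]
  split_ifs <;> rfl

lemma U2_off {F : BT k → BT k → BT k → BT k} {x y z u : BT k}
    (h1 : ¬(prec x z = true ∧ prec y z = true ∧ x ≠ y ∧ (F y z u).isVV = true))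
    (h2 : ¬(x = y ∧ prec y z = true)) : U2op F x y z u = BT.zero := by
  unfold U2op
  rw [if_neg (by simpa using h1), if_neg (by simpa using h2)]

lemma U2_same {F : BT k → BT k → BT k → BT k} {x y z u : BT k}
    (hxy : x = y) (hp : prec y z = true) : U2op F x y z u = F y z u := by
  unfold U2op
  rw [if_neg (by rintro ⟨-, -, hne, -⟩; exact hne hxy), if_pos (by exact ⟨hxy, hp⟩)]

lemma U2_zero_out {F : BT k → BT k → BT k → BT k} {x y z u : BT k}
    (hF : F y z u = BT.zero) : U2op F x y z u = BT.zero := by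
  unfold U2op
  rw [hF, if_neg (by rintro ⟨-, -, -, hvv⟩; simp [BT.isVV] at hvv)]
  split_ifs <;> rfl

lemma good_u1 (hm : ((cfgStep T)^[m] (Q0 k)).state = 0) (i : Fin (k+1)) (hi : i ≠ 0)
    (r t b : Bool) {f g h u : AA T m} (hf : GoodF T m f) (hg : GoodF T m g)
    (hh : GoodF T m h) (hu : GoodF T m u) :
    GoodF T m (fun y => U1op (mop T i r t b) (f y) (g y) (h y) (u y)) := by
  rcases hf with ⟨x0, hx0⟩ | ⟨p, hp, rfl⟩ | ⟨j1, Q1, hQ1, rfl⟩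
  · refine Or.inl ⟨x0, ?_⟩
    beta_reduce
    rw [hx0]
    exact U1_off (by rintro ⟨hp1, -⟩; rw [prec_left_false (x := BT.zero) rfl] at hp1; cases hp1)
      (by rintro ⟨hp1, -⟩; rw [prec_left_false (x := BT.zero) rfl] at hp1; cases hp1)
  · rcases hg with ⟨x0, hx0⟩ | ⟨q, hq, rfl⟩ | ⟨j2, Q2, hQ2, rfl⟩
    · refine Or.inl ⟨x0, ?_⟩
      beta_reduce
      rw [hx0]
      exact U1_off (by rintro ⟨hp1, -⟩; rw [prec_right_false (y := BT.zero) rfl] at hp1; cases hp1)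
        (by rintro ⟨hp1, -⟩; rw [prec_right_false (y := BT.zero) rfl] at hp1; cases hp1)
    · rcases hh with ⟨x0, hx0⟩ | ⟨q', hq', rfl⟩ | ⟨j3, Q3, hQ3, rfl⟩
      · refine Or.inl ⟨x0, ?_⟩
        beta_reduce
        rw [hx0]
        refine U1_off ?_ ?_
        · rintro ⟨-, hp2, -⟩; rw [prec_right_false (y := BT.zero) rfl] at hp2; cases hp2
        · rintro ⟨-, hyz⟩; exact aEl_ne_zero hyz
      · rcases hu with ⟨x0, hx0⟩ | ⟨w, hw, rfl⟩ | ⟨j, Q, hQ, rfl⟩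
        · refine Or.inl ⟨x0, ?_⟩
          beta_reduce
          rw [hx0]
          exact U1_zero_out (mop_u0 T i r t b)
        · refine Or.inl ⟨⟨0, zero_mem_Nset T m⟩, ?_⟩
          beta_reduce
          exact U1_zero_out (mop_uU aEl_isU T i r t b)
        · by_cases hqq : q = q'
          · subst hqq
            by_cases hq1 : q = p + 1
            · subst hq1
              have heq : (fun y => U1op (mop T i r t b) (aEl T m p y) (aEl T m (p+1) y)
                  (aEl T m (p+1) y) (betaEl T m j Q y))
                  = fun y => mop T i r t b (aEl T m p y) (aEl T m (p+1) y)
                    (betaEl T m j Q y) := by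
                funext y
                rcases y with _ | x
                · exact U1_same rfl rfl
                · rcases lt_trichotomy (x.1) p with h' | h' | h'
                  · rw [aEl_some_lt (n := p) h', aEl_some_lt (n := p+1) (by omega)]
                    exact U1_same rfl rfl
                  · rw [aEl_some_eq (n := p) h', aEl_some_lt (n := p+1) (by omega)]
                    exact U1_same rfl rfl
                  · rcases eq_or_lt_of_le (show p + 1 ≤ x.1 by omega) with h'' | h''
                    · rw [aEl_some_gt (n := p) (by omega), aEl_some_eq (n := p+1) h''.symm]
                      exact U1_same rfl rfl
                    · rw [aEl_some_gt (n := p) (by omega), aEl_some_gt (n := p+1) h'']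
                      exact U1_same rfl rfl
              rw [heq]
              exact mach_good hm i hi r t b hp hq j hQ
            · rcases lt_trichotomy p q with h' | h' | h'
              · have hmem : p + 1 ∈ Nset T m := Nset_interval T m hp hq (by omega) (by omega)
                refine Or.inl ⟨⟨p+1, hmem⟩, ?_⟩
                beta_reduce
                rw [aEl_some_gt (n := p) (show (p:ℤ) < p+1 by omega),
                  aEl_some_lt (n := q) (show (p:ℤ)+1 < q by omega)]
                refine U1_off ?_ ?_
                · rintro ⟨-, -, hne, -⟩; exact hne rfl
                · rintro ⟨hp1, -⟩; simp [prec] at hp1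
              · subst h'
                refine Or.inl ⟨⟨p, hp⟩, ?_⟩
                beta_reduce
                rw [aEl_some_eq (n := p) rfl]
                refine U1_off ?_ ?_
                · rintro ⟨-, -, hne, -⟩; exact hne rfl
                · rintro ⟨hp1, -⟩; simp [prec] at hp1
              · refine Or.inl ⟨⟨q, hq⟩, ?_⟩
                beta_reduce
                rw [aEl_some_lt (n := p) h', aEl_some_eq (n := q) rfl]
                refine U1_off ?_ ?_
                · rintro ⟨-, -, hne, -⟩; exact hne rfl
                · rintro ⟨hp1, -⟩; simp [prec] at hp1
          · rcases lt_trichotomy q q' with h' | h' | h'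
            · -- q < q' : kill at q (y = H, z = one)
              refine Or.inl ⟨⟨q, hq⟩, ?_⟩
              beta_reduce
              rw [aEl_some_eq (n := q) rfl, aEl_some_lt (n := q') h']
              rcases lt_trichotomy ((q:ℤ)) p with hqp | hqp | hqp
              · rw [aEl_some_lt (n := p) hqp]
                refine U1_off ?_ ?_
                · rintro ⟨hp1, -⟩; simp [prec] at hp1
                · rintro ⟨-, hyz⟩; cases hyz
              · rw [aEl_some_eq (n := p) hqp]
                refine U1_off ?_ ?_
                · rintro ⟨hp1, -⟩; simp [prec] at hp1
                · rintro ⟨-, hyz⟩; cases hyz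
              · rw [aEl_some_gt (n := p) hqp]
                refine U1_off ?_ ?_
                · rintro ⟨-, hp2, -⟩; simp [prec] at hp2
                · rintro ⟨-, hyz⟩; cases hyz
            · exact absurd h' hqq
            · -- q' < q : kill at q' (y = one, z = H)
              refine Or.inl ⟨⟨q', hq'⟩, ?_⟩
              beta_reduce
              rw [aEl_some_lt (n := q) h', aEl_some_eq (n := q') rfl]
              rcases lt_trichotomy ((q':ℤ)) p with hqp | hqp | hqp
              · rw [aEl_some_lt (n := p) hqp]
                refine U1_off ?_ ?_
                · rintro ⟨-, hp2, -⟩; simp [prec] at hp2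
                · rintro ⟨-, hyz⟩; cases hyz
              · rw [aEl_some_eq (n := p) hqp]
                refine U1_off ?_ ?_
                · rintro ⟨-, hp2, -⟩; simp [prec] at hp2
                · rintro ⟨-, hyz⟩; cases hyz
              · rw [aEl_some_gt (n := p) hqp]
                refine U1_off ?_ ?_
                · rintro ⟨hp1, -⟩; simp [prec] at hp1
                · rintro ⟨hp1, -⟩; simp [prec] at hp1
      · refine Or.inl ⟨⟨0, zero_mem_Nset T m⟩, ?_⟩
        beta_reduce
        refine U1_off ?_ ?_
        · rintro ⟨-, hp2, -⟩; rw [prec_right_false betaEl_isU] at hp2; cases hp2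
        · rintro ⟨-, hyz⟩; exact aEl_ne_betaEl hyz
    · refine Or.inl ⟨⟨0, zero_mem_Nset T m⟩, ?_⟩
      beta_reduce
      exact U1_off
        (by rintro ⟨hp1, -⟩; rw [prec_right_false betaEl_isU] at hp1; cases hp1)
        (by rintro ⟨hp1, -⟩; rw [prec_right_false betaEl_isU] at hp1; cases hp1)
  · refine Or.inl ⟨⟨0, zero_mem_Nset T m⟩, ?_⟩
    beta_reduce
    exact U1_off
      (by rintro ⟨hp1, -⟩; rw [prec_left_false betaEl_isU] at hp1; cases hp1)
      (by rintro ⟨hp1, -⟩; rw [prec_left_false betaEl_isU] at hp1; cases hp1)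

lemma good_u2 (hm : ((cfgStep T)^[m] (Q0 k)).state = 0) (i : Fin (k+1)) (hi : i ≠ 0)
    (r t b : Bool) {f g h u : AA T m} (hf : GoodF T m f) (hg : GoodF T m g)
    (hh : GoodF T m h) (hu : GoodF T m u) :
    GoodF T m (fun y => U2op (mop T i r t b) (f y) (g y) (h y) (u y)) := by
  rcases hg with ⟨x0, hx0⟩ | ⟨q, hq, rfl⟩ | ⟨j2, Q2, hQ2, rfl⟩
  · refine Or.inl ⟨x0, ?_⟩
    beta_reduce
    rw [hx0]
    exact U2_off (by rintro ⟨-, hp2, -⟩; rw [prec_left_false (x := BT.zero) rfl] at hp2; cases hp2)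
      (by rintro ⟨-, hp2⟩; rw [prec_left_false (x := BT.zero) rfl] at hp2; cases hp2)
  · rcases hh with ⟨x0, hx0⟩ | ⟨q', hq', rfl⟩ | ⟨j3, Q3, hQ3, rfl⟩
    · refine Or.inl ⟨x0, ?_⟩
      beta_reduce
      rw [hx0]
      exact U2_off (by rintro ⟨-, hp2, -⟩; rw [prec_right_false (y := BT.zero) rfl] at hp2; cases hp2)
        (by rintro ⟨-, hp2⟩; rw [prec_right_false (y := BT.zero) rfl] at hp2; cases hp2)
    · rcases hf with ⟨x0, hx0⟩ | ⟨p, hp, rfl⟩ | ⟨j1, Q1, hQ1, rfl⟩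
      · refine Or.inl ⟨x0, ?_⟩
        beta_reduce
        rw [hx0]
        refine U2_off ?_ ?_
        · rintro ⟨hp1, -⟩; rw [prec_left_false (x := BT.zero) rfl] at hp1; cases hp1
        · rintro ⟨hxy, -⟩; exact aEl_ne_zero hxy.symm
      · rcases hu with ⟨x0, hx0⟩ | ⟨w, hw, rfl⟩ | ⟨j, Q, hQ, rfl⟩
        · refine Or.inl ⟨x0, ?_⟩
          beta_reduce
          rw [hx0]
          exact U2_zero_out (mop_u0 T i r t b)
        · refine Or.inl ⟨⟨0, zero_mem_Nset T m⟩, ?_⟩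
          beta_reduce
          exact U2_zero_out (mop_uU aEl_isU T i r t b)
        · by_cases hpq : p = q
          · subst hpq
            by_cases hq'1 : q' = p + 1
            · subst hq'1
              have heq : (fun y => U2op (mop T i r t b) (aEl T m p y) (aEl T m p y)
                  (aEl T m (p+1) y) (betaEl T m j Q y))
                  = fun y => mop T i r t b (aEl T m p y) (aEl T m (p+1) y)
                    (betaEl T m j Q y) := by
                funext y
                rcases y with _ | x
                · exact U2_same rfl rfl
                · rcases lt_trichotomy (x.1) p with h' | h' | h'
                  · rw [aEl_some_lt (n := p) h', aEl_some_lt (n := p+1) (by omega)]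
                    exact U2_same rfl rfl
                  · rw [aEl_some_eq (n := p) h', aEl_some_lt (n := p+1) (by omega)]
                    exact U2_same rfl rfl
                  · rcases eq_or_lt_of_le (show p + 1 ≤ x.1 by omega) with h'' | h''
                    · rw [aEl_some_gt (n := p) (by omega), aEl_some_eq (n := p+1) h''.symm]
                      exact U2_same rfl rfl
                    · rw [aEl_some_gt (n := p) (by omega), aEl_some_gt (n := p+1) h'']
                      exact U2_same rfl rfl
              rw [heq]
              exact mach_good hm i hi r t b hp hq' j hQ
            · rcases lt_trichotomy p q' with h' | h' | h'
              · have hmem : p + 1 ∈ Nset T m := Nset_interval T m hp hq' (by omega) (by omega)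
                refine Or.inl ⟨⟨p+1, hmem⟩, ?_⟩
                beta_reduce
                rw [aEl_some_gt (n := p) (show (p:ℤ) < p+1 by omega),
                  aEl_some_lt (n := q') (show (p:ℤ)+1 < q' by omega)]
                refine U2_off ?_ ?_
                · rintro ⟨-, hp2, -⟩; simp [prec] at hp2
                · rintro ⟨-, hp2⟩; simp [prec] at hp2
              · subst h'
                refine Or.inl ⟨⟨p, hp⟩, ?_⟩
                beta_reduce
                rw [aEl_some_eq (n := p) rfl]
                refine U2_off ?_ ?_
                · rintro ⟨-, hp2, -⟩; simp [prec] at hp2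
                · rintro ⟨-, hp2⟩; simp [prec] at hp2
              · refine Or.inl ⟨⟨q', hq'⟩, ?_⟩
                beta_reduce
                rw [aEl_some_lt (n := p) h', aEl_some_eq (n := q') rfl]
                refine U2_off ?_ ?_
                · rintro ⟨-, hp2, -⟩; simp [prec] at hp2
                · rintro ⟨-, hp2⟩; simp [prec] at hp2
          · rcases lt_trichotomy p q with h' | h' | h'
            · -- p < q : kill at q (x = two, y = H)
              refine Or.inl ⟨⟨q, hq⟩, ?_⟩
              beta_reduce
              rw [aEl_some_gt (n := p) h', aEl_some_eq (n := q) rfl]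
              rcases lt_trichotomy ((q:ℤ)) q' with hz | hz | hz
              · rw [aEl_some_lt (n := q') hz]
                refine U2_off ?_ ?_
                · rintro ⟨hp1, -⟩; simp [prec] at hp1
                · rintro ⟨hxy, -⟩; cases hxy
              · rw [aEl_some_eq (n := q') hz]
                refine U2_off ?_ ?_
                · rintro ⟨-, hp2, -⟩; simp [prec] at hp2
                · rintro ⟨hxy, -⟩; cases hxy
              · rw [aEl_some_gt (n := q') hz]
                refine U2_off ?_ ?_
                · rintro ⟨-, hp2, -⟩; simp [prec] at hp2
                · rintro ⟨hxy, -⟩; cases hxy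
            · exact absurd h' hpq
            · -- q < p : kill at p (x = H, y = two)
              refine Or.inl ⟨⟨p, hp⟩, ?_⟩
              beta_reduce
              rw [aEl_some_eq (n := p) rfl, aEl_some_gt (n := q) h']
              rcases lt_trichotomy ((p:ℤ)) q' with hz | hz | hz
              · rw [aEl_some_lt (n := q') hz]
                refine U2_off ?_ ?_
                · rintro ⟨-, hp2, -⟩; simp [prec] at hp2
                · rintro ⟨hxy, -⟩; cases hxy
              · rw [aEl_some_eq (n := q') hz]
                refine U2_off ?_ ?_
                · rintro ⟨hp1, -⟩; simp [prec] at hp1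
                · rintro ⟨hxy, -⟩; cases hxy
              · rw [aEl_some_gt (n := q') hz]
                refine U2_off ?_ ?_
                · rintro ⟨hp1, -⟩; simp [prec] at hp1
                · rintro ⟨hxy, -⟩; cases hxy
      · refine Or.inl ⟨⟨0, zero_mem_Nset T m⟩, ?_⟩
        beta_reduce
        refine U2_off ?_ ?_
        · rintro ⟨hp1, -⟩; rw [prec_left_false betaEl_isU] at hp1; cases hp1
        · rintro ⟨hxy, -⟩; exact betaEl_ne_aEl hxy
    · refine Or.inl ⟨⟨0, zero_mem_Nset T m⟩, ?_⟩
      beta_reduce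
      exact U2_off
        (by rintro ⟨-, hp2, -⟩; rw [prec_right_false betaEl_isU] at hp2; cases hp2)
        (by rintro ⟨-, hp2⟩; rw [prec_right_false betaEl_isU] at hp2; cases hp2)
  · refine Or.inl ⟨⟨0, zero_mem_Nset T m⟩, ?_⟩
    beta_reduce
    exact U2_off
      (by rintro ⟨-, hp2, -⟩; rw [prec_left_false betaEl_isU] at hp2; cases hp2)
      (by rintro ⟨-, hp2⟩; rw [prec_left_false betaEl_isU] at hp2; cases hp2)

lemma good_mach (hm : ((cfgStep T)^[m] (Q0 k)).state = 0) (i : Fin (k+1)) (hi : i ≠ 0)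
    (r t b : Bool) {f g h : AA T m} (hf : GoodF T m f) (hg : GoodF T m g)
    (hh : GoodF T m h) :
    GoodF T m (fun y => mop T i r t b (f y) (g y) (h y)) := by
  rcases hf with ⟨x0, hx0⟩ | ⟨p, hp, rfl⟩ | ⟨j1, Q1, hQ1, rfl⟩
  · exact Or.inl ⟨x0, by beta_reduce; rw [hx0]; exact mop_xU (x := BT.zero) rfl T i r t b⟩
  · rcases hg with ⟨x0, hx0⟩ | ⟨q, hq, rfl⟩ | ⟨j2, Q2, hQ2, rfl⟩
    · exact Or.inl ⟨x0, by beta_reduce; rw [hx0]; exact mop_yU (y := BT.zero) rfl T i r t b⟩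
    · rcases hh with ⟨x0, hx0⟩ | ⟨w, hw, rfl⟩ | ⟨j, Q, hQ, rfl⟩
      · exact Or.inl ⟨x0, by beta_reduce; rw [hx0]; exact mop_u0 T i r t b⟩
      · exact Or.inl ⟨⟨0, zero_mem_Nset T m⟩,
          by beta_reduce; exact mop_uU aEl_isU T i r t b⟩
      · exact mach_good hm i hi r t b hp hq j hQ
    · exact Or.inl ⟨⟨0, zero_mem_Nset T m⟩,
        by beta_reduce; exact mop_yU betaEl_isU T i r t b⟩
  · exact Or.inl ⟨⟨0, zero_mem_Nset T m⟩,
      by beta_reduce; exact mop_xU betaEl_isU T i r t b⟩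

/-- every element of K lies in K₀ ∪ S ∪ Λ -/
lemma closure (hm : ((cfgStep T)^[m] (Q0 k)).state = 0) {f : AA T m}
    (hf : InK T m f) : GoodF T m f := by
  induction hf with
  | gen_a n hn => exact Or.inr (Or.inl ⟨n, hn, rfl⟩)
  | gen_q j => exact Or.inr (Or.inr ⟨j, Q0 k, Q0_star T m, qEl_eq_beta j⟩)
  | zeroOp => exact Or.inl ⟨⟨0, zero_mem_Nset T m⟩, rfl⟩
  | t0 _ ih => exact good_T0 ih
  | t1 _ _ ih1 ih2 => exact good_T1 ih1 ih2
  | meet _ _ ih1 ih2 => exact good_meet ih1 ih2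
  | meetI j _ _ ih1 ih2 => exact good_meetI hm j ih1 ih2
  | jop _ _ _ ih1 ih2 ih3 => exact good_J' ih1 ih2 ih3
  | s1 hf1 hg1 hh1 hp1 ih1 ih2 ih3 ih4 => exact good_S1 ih1 (inK_noP hg1)
  | s2 hf1 hg1 hh1 hp1 hq1 ih1 ih2 ih3 ih4 ih5 => exact good_S2 ih1 ih2 (inK_noP hh1)
  | mach i hi r t b _ _ _ ih1 ih2 ih3 => exact good_mach hm i hi r t b ih1 ih2 ih3
  | u1 i hi r t b _ _ _ _ ih1 ih2 ih3 ih4 => exact good_u1 hm i hi r t b ih1 ih2 ih3 ih4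
  | u2 i hi r t b _ _ _ _ ih1 ih2 ih3 ih4 => exact good_u2 hm i hi r t b ih1 ih2 ih3 ih4

end Lemma41j

/-- Lemma 4.1: K = K₀ ∪ S ∪ Λ. -/
theorem statement11 {k : ℕ} (hk : 0 < k) (T : TM k) (m : ℕ)
    (hm : ((cfgStep T)^[m] (Q0 k)).state = 0) :
    ∀ f : AA T m, InK T m f ↔ (f ∈ K0 T m ∨ f ∈ Sset T m ∨ f ∈ Lam T m) := by
  intro f
  constructor
  · intro hf
    rcases closure hm hf with ⟨x, hx⟩ | ⟨n, hn, hfeq⟩ | ⟨j, Q, hQ, hfeq⟩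
    · exact Or.inl ⟨hf, x, hx⟩
    · exact Or.inr (Or.inl ⟨n, hn, hfeq⟩)
    · exact Or.inr (Or.inr ⟨j, Q, hQ, hfeq⟩)
  · rintro (⟨hK, -⟩ | ⟨n, hn, rfl⟩ | ⟨j, Q, hQ, rfl⟩)
    · exact hK
    · exact InK.gen_a n hn
    · exact beta_mem j hQ

end Paper
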